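/- arXiv:math-ph/0011009 — 5 statements merged into one kernel-verified Lean document; each statement's English description precedes it below -/
import Mathlib

section
/- Let ζ : I₁ × (−δ,δ) → ℂ be the unique function from the implicit-equation theorem with x − ζ(x,κ) − κ²ϱ(x)𝒢_Ω(u⁻¹(x),ζ(x,κ)) = 0 and ζ(x,κ) ∈ (x−Δ,x+Δ)+i(−Δ,Δ). Then Im ζ(x,κ) ≤ 0 for all x∈I₁ and κ∈(−δ,δ). Moreover, if I'⊂I₁ is compact and ϱ(x)·v(u⁻¹(x), x−u⁻¹(x)) ≠ 0 for all x∈I', then there exists δ₁ ∈ (0,δ] such that Im ζ(x,κ) < 0 for all x∈I' and all κ with 0<|κ|<δ₁. -/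
open MeasureTheory Set Filter

/-- Existence of the principal value `P.V. ∫_ν^∞ v(y,z)/(y+z−ξ) dz = L`. -/
def HasPrincipalValue (v : ℝ → ℝ → ℝ) (ν y ξ L : ℝ) : Prop :=
  Tendsto (fun ε : ℝ =>
      (∫ z in Ioo ν (ξ - y - ε), v y z / (y + z - ξ)) +
        ∫ z in Ioi (ξ - y + ε), v y z / (y + z - ξ))
    (nhdsWithin 0 (Ioi 0)) (nhds L)

/-- `G(y,ζ) = ∫_ν^∞ v(y,z)/(y+z−ζ) dz`. -/
noncomputable def bandG (v : ℝ → ℝ → ℝ) (ν y : ℝ) (ζ : ℂ) : ℂ :=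
  ∫ z in Ioi ν, (v y z : ℂ) / (y + z - ζ)

/-- The half-line `(−∞, c]` viewed as a subset of `ℂ`. -/
def slitSet (c : ℝ) : Set ℂ := {ζ : ℂ | ζ.im = 0 ∧ ζ.re ≤ c}

/-- The open box `(x−Δ, x+Δ) + i(−Δ, Δ)` in `ℂ`. -/
def cBox (x Δ : ℝ) : Set ℂ :=
  {ζ : ℂ | x - Δ < ζ.re ∧ ζ.re < x + Δ ∧ -Δ < ζ.im ∧ ζ.im < Δ}


private lemma kernel_im (a y z : ℝ) (ζ : ℂ) :
    (((a : ℝ) : ℂ) / ((y : ℂ) + (z : ℂ) - ζ)).im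
      = a * (ζ.im / ((y + z - ζ.re) ^ 2 + ζ.im ^ 2)) := by
  rw [Complex.div_im]
  have h1 : ((y : ℂ) + (z : ℂ) - ζ).re = y + z - ζ.re := by simp
  have h2 : ((y : ℂ) + (z : ℂ) - ζ).im = -ζ.im := by simp
  have h3 : Complex.normSq ((y : ℂ) + (z : ℂ) - ζ) = (y + z - ζ.re) ^ 2 + ζ.im ^ 2 := by
    rw [Complex.normSq_apply, h1, h2]; ring
  rw [h1, h2, h3]
  simp only [Complex.ofReal_im, Complex.ofReal_re]
  ring

private lemma nonneg_of_continuousOn_of_ae {a b : ℝ} (hab : a < b) {g : ℝ → ℝ}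
    (hg : ContinuousOn g (Icc a b)) (hae : ∀ᵐ t, t ∈ Icc a b → 0 ≤ g t) :
    ∀ x ∈ Icc a b, 0 ≤ g x := by
  intro x hx
  by_contra hlt
  push_neg at hlt
  have hmem : g ⁻¹' (Iio 0) ∈ nhdsWithin x (Icc a b) := hg x hx (Iio_mem_nhds hlt)
  rw [mem_nhdsWithin] at hmem
  obtain ⟨U, hUo, hxU, hUsub⟩ := hmem
  obtain ⟨r, hr, hball⟩ := Metric.isOpen_iff.mp hUo x hxU
  have hab' : max a (x - r) < min b (x + r) := by
    have h1 := hx.1; have h2 := hx.2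
    apply max_lt (lt_min hab (by linarith)) (lt_min (by linarith) (by linarith))
  have hsub : Ioo (max a (x - r)) (min b (x + r)) ⊆ {t | ¬ (t ∈ Icc a b → 0 ≤ g t)} := by
    intro t ht
    have h1 := lt_of_le_of_lt (le_max_left a (x - r)) ht.1
    have h1' := lt_of_le_of_lt (le_max_right a (x - r)) ht.1
    have h2 := lt_of_lt_of_le ht.2 (min_le_left b (x + r))
    have h2' := lt_of_lt_of_le ht.2 (min_le_right b (x + r))
    have htI : t ∈ Icc a b := ⟨h1.le, h2.le⟩
    have htb : t ∈ Metric.ball x r := by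
      rw [Metric.mem_ball, Real.dist_eq, abs_lt]; constructor <;> linarith
    have hgt : g t < 0 := hUsub ⟨hball htb, htI⟩
    exact fun h => absurd (h htI) (not_le.mpr hgt)
  have h0 : volume (Ioo (max a (x - r)) (min b (x + r))) = 0 :=
    measure_mono_null hsub (ae_iff.mp hae)
  rw [Real.volume_Ioo] at h0
  rw [ENNReal.ofReal_eq_zero] at h0
  linarith

/-- Theorem III.4(b): the solution `ζ(x,κ)` of
`x − ζ(x,κ) − κ²ϱ(x)𝒢_Ω(u⁻¹(x),ζ(x,κ)) = 0` satisfies `Im ζ(x,κ) ≤ 0`; moreover, on a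
compact `I' ⊆ I₁` where `ϱ(x)v(u⁻¹(x),x−u⁻¹(x)) ≠ 0` there is `δ₁ ∈ (0,δ]` such that
`Im ζ(x,κ) < 0` for `0 < |κ| < δ₁`. -/
theorem statement_5
    (ξ₀m ξ₀p ξ₁m ξ₁p ν C C₁ : ℝ)
    (hord : ξ₀m < ξ₀p ∧ ξ₀p < ξ₁m ∧ ξ₁m < ξ₁p) (hν : 0 ≤ ν) (hC : 0 < C) (hC₁ : 0 < C₁)
    (w₀ w₁ ω : ℝ → ℝ) (lam : ℝ → ℝ → ℂ)
    (hw₀_pos : ∀ᵐ y, y ∈ Icc ξ₀m ξ₀p → 0 < w₀ y)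
    (hw₁_pos : ∀ᵐ x, x ∈ Icc ξ₁m ξ₁p → 0 < w₁ x)
    (hw₀_int : IntegrableOn w₀ (Icc ξ₀m ξ₀p)) (hw₁_int : IntegrableOn w₁ (Icc ξ₁m ξ₁p))
    (hω_nonneg : ∀ᵐ z, z ∈ Ici ν → 0 ≤ ω z) (hω_int : IntegrableOn ω (Ici ν))
    -- (a1): `u : I₀ → I₁` is a bijective C¹-diffeomorphism, with inverse `uinv`
    (u uinv : ℝ → ℝ)
    (hu_bij : BijOn u (Icc ξ₀m ξ₀p) (Icc ξ₁m ξ₁p))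
    (hu_C1 : ContDiffOn ℝ 1 u (Icc ξ₀m ξ₀p))
    (huinv_C1 : ContDiffOn ℝ 1 uinv (Icc ξ₁m ξ₁p))
    (hu_inv : ∀ y ∈ Icc ξ₀m ξ₀p, uinv (u y) = y)
    (hinv_u : ∀ x ∈ Icc ξ₁m ξ₁p, u (uinv x) = x)
    (huinv_maps : MapsTo uinv (Icc ξ₁m ξ₁p) (Icc ξ₀m ξ₀p))
    (hu_deriv : ∀ y ∈ Icc ξ₀m ξ₀p, deriv u y ≠ 0)
    -- (a2)
    (v : ℝ → ℝ → ℝ)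
    (hv_def : ∀ y z, v y z = ‖lam y z‖ ^ 2 * ω z)
    (hlam_meas : Measurable fun p : ℝ × ℝ => lam p.1 p.2)
    (hv_intOn : ∀ y ∈ Icc ξ₀m ξ₀p, IntegrableOn (v y) (Ici ν))
    (hv_int : ∀ y ∈ Icc ξ₀m ξ₀p, (∫ z in Ici ν, v y z) ≤ C)
    (hw : ∀ y ∈ Icc ξ₀m ξ₀p, w₀ y ≤ C₁ * |deriv u y| * w₁ (u y))
    -- the Radon–Nikodým factor `ϱ`
    (ρ : ℝ → ℝ)
    (hρ : ∀ x ∈ Icc ξ₁m ξ₁p, ρ x = w₀ (uinv x) / (|deriv u (uinv x)| * w₁ x))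
    -- (a3): holomorphic extension of `v(y,·)` and the open set `Ω`
    (vC : ℝ → ℂ → ℂ) (Ωv : ℝ → Set ℂ) (Ω : Set ℂ)
    (hΩv_open : ∀ y ∈ Icc ξ₀m ξ₀p, IsOpen (Ωv y))
    (hΩv_sup : ∀ y ∈ Icc ξ₀m ξ₀p, ∀ z ∈ Ioi ν, (z : ℂ) ∈ Ωv y)
    (hvC_holo : ∀ y ∈ Icc ξ₀m ξ₀p, DifferentiableOn ℂ (vC y) (Ωv y))
    (hvC_agree : ∀ y ∈ Icc ξ₀m ξ₀p, ∀ z ∈ Ioi ν, vC y (z : ℂ) = (v y z : ℂ))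
    (hΩ_open : IsOpen Ω)
    (hΩ_sup : ∀ ξ ∈ Ioi (ξ₀m + ν), (ξ : ℂ) ∈ Ω)
    (hΩ_sub : ∀ y ∈ Icc ξ₀m ξ₀p, ∀ ζ ∈ Ω, ζ - (y : ℂ) ∈ Ωv y)
    -- the analytic continuation `𝒢_Ω` of `G` across the cut, and the principal value `I`
    (Ipv : ℝ → ℝ → ℝ)
    (hIpv : ∀ y ∈ Icc ξ₀m ξ₀p, ∀ ξ : ℝ, y + ν < ξ → HasPrincipalValue v ν y ξ (Ipv y ξ))
    (GΩ : ℝ → ℂ → ℂ)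
    (hGΩ_holo : ∀ y ∈ Icc ξ₀m ξ₀p, DifferentiableOn ℂ (GΩ y) (Ω \ slitSet (y + ν)))
    (hGΩ_up : ∀ y ∈ Icc ξ₀m ξ₀p, ∀ ζ ∈ Ω, 0 < ζ.im → GΩ y ζ = bandG v ν y ζ)
    (hGΩ_real : ∀ y ∈ Icc ξ₀m ξ₀p, ∀ ξ : ℝ, y + ν < ξ → (ξ : ℂ) ∈ Ω →
      GΩ y (ξ : ℂ) = (Ipv y ξ : ℂ) + Real.pi * Complex.I * vC y ((ξ : ℂ) - y))
    (hGΩ_low : ∀ y ∈ Icc ξ₀m ξ₀p, ∀ ζ ∈ Ω, ζ.im < 0 →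
      GΩ y ζ = bandG v ν y ζ + 2 * Real.pi * Complex.I * vC y (ζ - y))
    -- (a4): joint continuity
    (hcont : ContinuousOn (fun p : ℝ × ℂ => (ρ p.1 : ℂ) * GΩ (uinv p.1) p.2)
      {p : ℝ × ℂ | p.1 ∈ Icc ξ₁m ξ₁p ∧ p.2 ∈ Ω \ slitSet (uinv p.1 + ν)})
    (hcont' : ContinuousOn (fun p : ℝ × ℂ => (ρ p.1 : ℂ) * deriv (GΩ (uinv p.1)) p.2)
      {p : ℝ × ℂ | p.1 ∈ Icc ξ₁m ξ₁p ∧ p.2 ∈ Ω \ slitSet (uinv p.1 + ν)})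
    -- (a5)
    (ha5 : ∀ x ∈ Icc ξ₁m ξ₁p, uinv x + ν < x)
    -- the function `ζ(x,κ)` from the implicit-equation theorem
    (Δ δ : ℝ) (hΔ : 0 < Δ) (hδ : 0 < δ) (Z : ℝ → ℝ → ℂ)
    (hZ : ∀ x ∈ Icc ξ₁m ξ₁p, ∀ κ ∈ Ioo (-δ) δ,
      Z x κ ∈ cBox x Δ ∧ cBox x Δ ⊆ Ω \ slitSet (uinv x + ν) ∧
      (x : ℂ) - Z x κ - (κ : ℂ) ^ 2 * (ρ x : ℂ) * GΩ (uinv x) (Z x κ) = 0)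
    (hZcont : ContinuousOn (fun p : ℝ × ℝ => Z p.1 p.2) (Icc ξ₁m ξ₁p ×ˢ Ioo (-δ) δ))
    (hZsmooth : ∀ x ∈ Icc ξ₁m ξ₁p, ContDiffOn ℝ (⊤ : ℕ∞) (Z x) (Ioo (-δ) δ)) :
    (∀ x ∈ Icc ξ₁m ξ₁p, ∀ κ ∈ Ioo (-δ) δ, (Z x κ).im ≤ 0) ∧
    ∀ I' : Set ℝ, IsCompact I' → I' ⊆ Icc ξ₁m ξ₁p →
      (∀ x ∈ I', ρ x * v (uinv x) (x - uinv x) ≠ 0) →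
      ∃ δ₁ : ℝ, 0 < δ₁ ∧ δ₁ ≤ δ ∧
        ∀ x ∈ I', ∀ κ : ℝ, 0 < |κ| → |κ| < δ₁ → (Z x κ).im < 0 := by
  obtain ⟨h01, h02, h12⟩ := hord
  -- a.e. nonnegativity of v y on (ν, ∞)
  have hvnn : ∀ y : ℝ, ∀ᵐ z : ℝ, z ∈ Ioi ν → 0 ≤ v y z := by
    intro y
    filter_upwards [hω_nonneg] with z hz hz'
    rw [hv_def]
    exact mul_nonneg (by positivity) (hz (Ioi_subset_Ici_self hz'))
  have hvnn' : ∀ y : ℝ, ∀ᵐ z ∂(volume.restrict (Ioi ν)), 0 ≤ v y z := fun y =>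
    (ae_restrict_iff' measurableSet_Ioi).mpr (hvnn y)
  -- integrability of the weighted kernels
  have hWint : ∀ y ∈ Icc ξ₀m ξ₀p, ∀ c d : ℝ, d ≠ 0 →
      Integrable (fun z => v y z * (d / ((y + z - c) ^ 2 + d ^ 2)))
        (volume.restrict (Ioi ν)) := by
    intro y hy c d hd
    have hvint : IntegrableOn (v y) (Ioi ν) := (hv_intOn y hy).mono_set Ioi_subset_Ici_self
    have hwc : Continuous fun z : ℝ => d / ((y + z - c) ^ 2 + d ^ 2) := by
      apply continuous_const.div (by fun_prop)
      intro z
      positivity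
    have hb : ∀ᵐ z ∂(volume.restrict (Ioi ν)),
        ‖d / ((y + z - c) ^ 2 + d ^ 2)‖ ≤ |d|⁻¹ := by
      refine Eventually.of_forall fun z => ?_
      rw [Real.norm_eq_abs, abs_div, abs_of_pos (show (0:ℝ) < (y + z - c) ^ 2 + d ^ 2 by positivity)]
      rw [div_le_iff₀ (by positivity), inv_mul_eq_div, le_div_iff₀ (abs_pos.mpr hd)]
      have : |d| * |d| = d ^ 2 := by rw [← abs_mul, ← sq, abs_of_pos (by positivity)]
      nlinarith [sq_nonneg (y + z - c)]
    have := Integrable.bdd_mul (f := fun z : ℝ => d / ((y + z - c) ^ 2 + d ^ 2))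
      hvint hwc.aestronglyMeasurable hb
    exact this.congr (Eventually.of_forall fun z => by ring)
  -- imaginary part of bandG
  have imBandG : ∀ y ∈ Icc ξ₀m ξ₀p, ∀ ζ : ℂ, ζ.im ≠ 0 →
      (bandG v ν y ζ).im
        = ∫ z in Ioi ν, v y z * (ζ.im / ((y + z - ζ.re) ^ 2 + ζ.im ^ 2)) := by
    intro y hy ζ hζ
    have hvint : IntegrableOn (v y) (Ioi ν) := (hv_intOn y hy).mono_set Ioi_subset_Ici_self
    have hden : Continuous fun z : ℝ => ((y : ℂ) + (z : ℂ) - ζ)⁻¹ := by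
      apply Continuous.inv₀ (by fun_prop)
      intro z
      intro h0
      have : ((y : ℂ) + (z : ℂ) - ζ).im = 0 := by rw [h0]; simp
      simp at this
      exact hζ this
    have hb : ∀ᵐ z : ℝ ∂(volume.restrict (Ioi ν)),
        ‖((y : ℂ) + (z : ℂ) - ζ)⁻¹‖ ≤ |ζ.im|⁻¹ := by
      refine Eventually.of_forall fun z => ?_
      rw [norm_inv]
      apply inv_anti₀ (abs_pos.mpr hζ)
      calc |ζ.im| = |((y : ℂ) + (z : ℂ) - ζ).im| := by simp
        _ ≤ ‖(y : ℂ) + (z : ℂ) - ζ‖ := Complex.abs_im_le_norm _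
        _ = ‖(y : ℂ) + (z : ℂ) - ζ‖ := rfl
    have hint : Integrable (fun z : ℝ => ((v y z : ℝ) : ℂ) / ((y : ℂ) + (z : ℂ) - ζ))
        (volume.restrict (Ioi ν)) := by
      have := Integrable.bdd_mul (f := fun z : ℝ => ((y : ℂ) + (z : ℂ) - ζ)⁻¹)
        hvint.ofReal hden.aestronglyMeasurable hb
      exact this.congr (Eventually.of_forall fun z => by simp [div_eq_mul_inv, mul_comm])
    have h1 : (bandG v ν y ζ).im
        = ∫ z in Ioi ν, (((v y z : ℝ) : ℂ) / ((y : ℂ) + (z : ℂ) - ζ)).im := by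
      rw [bandG]
      exact (integral_im hint).symm
    rw [h1]
    exact integral_congr_ae (Eventually.of_forall fun z => kernel_im (v y z) y z ζ)
  -- a.e. nonnegativity of ρ on I₁
  have haeρ : ∀ᵐ t : ℝ, t ∈ Icc ξ₁m ξ₁p → 0 ≤ ρ t := by
    have hN : volume {y : ℝ | ¬ (y ∈ Icc ξ₀m ξ₀p → 0 < w₀ y)} = 0 := ae_iff.mp hw₀_pos
    set s := toMeasurable volume {y : ℝ | ¬ (y ∈ Icc ξ₀m ξ₀p → 0 < w₀ y)} ∩ Icc ξ₀m ξ₀p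
      with hsdef
    have hsm : MeasurableSet s := (measurableSet_toMeasurable _ _).inter measurableSet_Icc
    have hs0 : volume s = 0 := le_antisymm
      (le_trans (measure_mono inter_subset_left) (by rw [measure_toMeasurable, hN])) zero_le
    have hder : ∀ t ∈ s, HasFDerivWithinAt u (fderivWithin ℝ u (Icc ξ₀m ξ₀p) t) s t := by
      intro t ht
      exact (((hu_C1.differentiableOn one_ne_zero) t ht.2).hasFDerivWithinAt).mono inter_subset_right
    have himg : volume (u '' s) = 0 := by
      have h := MeasureTheory.addHaar_image_le_lintegral_abs_det_fderiv volume hsm hder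
      rw [Measure.restrict_eq_zero.mpr hs0, lintegral_zero_measure] at h
      exact le_antisymm h zero_le
    have hw0ae : ∀ᵐ t : ℝ, t ∈ Icc ξ₁m ξ₁p → 0 ≤ w₀ (uinv t) := by
      rw [ae_iff]
      refine measure_mono_null (fun t ht => ?_) himg
      obtain ⟨ht1, ht2⟩ := Classical.not_imp.mp ht
      refine ⟨uinv t, ?_, hinv_u t ht1⟩
      refine ⟨subset_toMeasurable _ _ ?_, huinv_maps ht1⟩
      rw [mem_setOf_eq, Classical.not_imp]
      exact ⟨huinv_maps ht1, fun h => ht2 h.le⟩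
    filter_upwards [hw0ae, hw₁_pos] with t h0t h1t ht
    rw [hρ t ht]
    exact div_nonneg (h0t ht) (mul_nonneg (abs_nonneg _) (h1t ht).le)
  -- the basic identity for Im Z
  have him : ∀ x ∈ Icc ξ₁m ξ₁p, ∀ κ ∈ Ioo (-δ) δ,
      (Z x κ).im = -(κ ^ 2 * (ρ x * (GΩ (uinv x) (Z x κ)).im)) := by
    intro x hx κ hκ
    have hE := (hZ x hx κ hκ).2.2
    have h' : (x : ℂ) - Z x κ = (κ : ℂ) ^ 2 * (ρ x : ℂ) * GΩ (uinv x) (Z x κ) :=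
      sub_eq_zero.mp hE
    have hc : (κ : ℂ) ^ 2 * (ρ x : ℂ) = ((κ ^ 2 * ρ x : ℝ) : ℂ) := by push_cast; ring
    rw [hc] at h'
    have h2 := congrArg Complex.im h'
    rw [Complex.sub_im, Complex.ofReal_im] at h2
    rw [show (((κ ^ 2 * ρ x : ℝ) : ℂ) * GΩ (uinv x) (Z x κ)).im
        = (κ ^ 2 * ρ x) * (GΩ (uinv x) (Z x κ)).im from by
      rw [Complex.mul_im, Complex.ofReal_re, Complex.ofReal_im]; ring] at h2
    linear_combination -h2
  -- Part 1
  have part1 : ∀ x ∈ Icc ξ₁m ξ₁p, ∀ κ ∈ Ioo (-δ) δ, (Z x κ).im ≤ 0 := by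
    intro x hx κ hκ
    by_contra hpos
    push_neg at hpos
    have hyI : uinv x ∈ Icc ξ₀m ξ₀p := huinv_maps hx
    obtain ⟨hbox, hboxsub, _⟩ := hZ x hx κ hκ
    have hζΩ : Z x κ ∈ Ω \ slitSet (uinv x + ν) := hboxsub hbox
    have hGup : GΩ (uinv x) (Z x κ) = bandG v ν (uinv x) (Z x κ) :=
      hGΩ_up (uinv x) hyI (Z x κ) hζΩ.1 hpos
    have himζ := him x hx κ hκ
    set A := ∫ z in Ioi ν,
      v (uinv x) z * ((Z x κ).im / ((uinv x + z - (Z x κ).re) ^ 2 + (Z x κ).im ^ 2)) with hA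
    have hGim : (GΩ (uinv x) (Z x κ)).im = A := by
      rw [hGup]; exact imBandG (uinv x) hyI (Z x κ) (ne_of_gt hpos)
    have hAnn : 0 ≤ A := by
      apply integral_nonneg_of_ae
      filter_upwards [hvnn' (uinv x)] with z hz
      exact mul_nonneg hz (div_nonneg hpos.le (by positivity))
    have h5 : κ ^ 2 * (ρ x * A) < 0 := by
      rw [himζ, hGim] at hpos; linarith
    have hρA : ρ x * A < 0 := by nlinarith [sq_nonneg κ]
    have hρneg : ρ x < 0 := by nlinarith
    have hApos : 0 < A := by
      rcases hAnn.lt_or_eq with h | h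
      · exact h
      · exfalso; rw [← h, mul_zero] at hρA; exact lt_irrefl 0 hρA
    -- test point ζ₀
    set ζ₀ : ℂ := (x : ℂ) + (Δ / 2) * Complex.I with hζ₀def
    have hζ₀re : ζ₀.re = x := by simp [hζ₀def]
    have hζ₀im : ζ₀.im = Δ / 2 := by simp [hζ₀def]
    have hζ₀impos : 0 < ζ₀.im := by rw [hζ₀im]; linarith
    have hζ₀box : ζ₀ ∈ cBox x Δ := by
      refine ⟨?_, ?_, ?_, ?_⟩ <;> simp only [hζ₀re, hζ₀im] <;> linarith
    have hζ₀Ω : ζ₀ ∈ Ω := (hboxsub hζ₀box).1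
    have hζ₀notslit : ∀ c : ℝ, ζ₀ ∉ slitSet c := by
      intro c hs
      have := hs.1
      rw [hζ₀im] at this
      linarith
    -- imaginary part of GΩ at ζ₀ for any parameter t ∈ I₁
    have hGζ₀ : ∀ t ∈ Icc ξ₁m ξ₁p, (GΩ (uinv t) ζ₀).im
        = ∫ z in Ioi ν, v (uinv t) z * (ζ₀.im / ((uinv t + z - ζ₀.re) ^ 2 + ζ₀.im ^ 2)) := by
      intro t ht
      rw [hGΩ_up (uinv t) (huinv_maps ht) ζ₀ hζ₀Ω hζ₀impos]
      exact imBandG (uinv t) (huinv_maps ht) ζ₀ (ne_of_gt hζ₀impos)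
    have hGζ₀nn : ∀ t ∈ Icc ξ₁m ξ₁p, 0 ≤ (GΩ (uinv t) ζ₀).im := by
      intro t ht
      rw [hGζ₀ t ht]
      apply integral_nonneg_of_ae
      filter_upwards [hvnn' (uinv t)] with z hz
      exact mul_nonneg hz (div_nonneg hζ₀impos.le (by positivity))
    -- continuity of g
    have hgc : ContinuousOn (fun t : ℝ => ρ t * (GΩ (uinv t) ζ₀).im) (Icc ξ₁m ξ₁p) := by
      have hmap : MapsTo (fun t : ℝ => ((t, ζ₀) : ℝ × ℂ)) (Icc ξ₁m ξ₁p)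
          {p : ℝ × ℂ | p.1 ∈ Icc ξ₁m ξ₁p ∧ p.2 ∈ Ω \ slitSet (uinv p.1 + ν)} :=
        fun t ht => ⟨ht, hζ₀Ω, hζ₀notslit _⟩
      have h1 := hcont.comp ((continuous_id.prodMk continuous_const).continuousOn) hmap
      have h2 := Complex.continuous_im.comp_continuousOn h1
      exact h2.congr (fun t ht => by simp [Complex.mul_im])
    have hgae : ∀ᵐ t, t ∈ Icc ξ₁m ξ₁p → 0 ≤ ρ t * (GΩ (uinv t) ζ₀).im := by
      filter_upwards [haeρ] with t hρt ht
      exact mul_nonneg (hρt ht) (hGζ₀nn t ht)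
    have hgx : 0 ≤ ρ x * (GΩ (uinv x) ζ₀).im :=
      nonneg_of_continuousOn_of_ae h12 hgc hgae x hx
    have hGle : (GΩ (uinv x) ζ₀).im ≤ 0 := by nlinarith [hGζ₀nn x hx]
    have hA'0 : (∫ z in Ioi ν,
        v (uinv x) z * (ζ₀.im / ((uinv x + z - ζ₀.re) ^ 2 + ζ₀.im ^ 2))) = 0 := by
      have h6 := hGζ₀ x hx
      have h7 := hGζ₀nn x hx
      rw [h6] at hGle h7
      exact le_antisymm hGle h7
    have hint' : Integrable
        (fun z => v (uinv x) z * (ζ₀.im / ((uinv x + z - ζ₀.re) ^ 2 + ζ₀.im ^ 2)))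
        (volume.restrict (Ioi ν)) := hWint (uinv x) hyI ζ₀.re ζ₀.im (ne_of_gt hζ₀impos)
    have hptnn : 0 ≤ᵐ[volume.restrict (Ioi ν)]
        fun z => v (uinv x) z * (ζ₀.im / ((uinv x + z - ζ₀.re) ^ 2 + ζ₀.im ^ 2)) := by
      filter_upwards [hvnn' (uinv x)] with z hz
      exact mul_nonneg hz (div_nonneg hζ₀impos.le (by positivity))
    have hae0 := (integral_eq_zero_iff_of_nonneg_ae hptnn hint').mp hA'0
    have hv0 : (fun z => v (uinv x) z) =ᵐ[volume.restrict (Ioi ν)] 0 := by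
      filter_upwards [hae0] with z hz
      have hw : 0 < ζ₀.im / ((uinv x + z - ζ₀.re) ^ 2 + ζ₀.im ^ 2) :=
        div_nonneg hζ₀impos.le (by positivity) |>.lt_of_ne (by
          symm
          apply div_ne_zero (ne_of_gt hζ₀impos)
          positivity)
      simp only [Pi.zero_apply] at hz ⊢
      exact (mul_eq_zero.mp hz).resolve_right (ne_of_gt hw)
    have hA0 : A = 0 := by
      rw [hA]
      rw [integral_congr_ae (g := fun _ : ℝ => (0 : ℝ)) (by
        filter_upwards [hv0] with z hz
        simp only [Pi.zero_apply] at hz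
        rw [hz, zero_mul])]
      simp
    rw [hA0] at hApos
    exact lt_irrefl 0 hApos
  refine ⟨part1, ?_⟩
  intro I' hI'c hI'sub hI'ne
  by_contra hcon
  push_neg at hcon
  have hstep : ∀ n : ℕ, ∃ x ∈ I', ∃ κ : ℝ, 0 < |κ| ∧ |κ| < δ / (n + 1) ∧ 0 ≤ (Z x κ).im := by
    intro n
    refine hcon (δ / (n + 1)) (by positivity) ?_
    apply div_le_self hδ.le
    have : (0:ℝ) ≤ n := Nat.cast_nonneg n
    linarith
  choose xs hxs κs hκ1 hκ2 him0 using hstep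
  have hκδ : ∀ n, |κs n| < δ := fun n => lt_of_lt_of_le (hκ2 n) (by
    apply div_le_self hδ.le
    have : (0:ℝ) ≤ n := Nat.cast_nonneg n
    linarith)
  have hκmem : ∀ n, κs n ∈ Ioo (-δ) δ := fun n => abs_lt.mp (hκδ n)
  obtain ⟨xl, hxl, φ, hφ, hxtend⟩ := hI'c.tendsto_subseq hxs
  have hκtend : Tendsto (fun n => κs (φ n)) atTop (nhds 0) := by
    have hb : ∀ n : ℕ, |κs (φ n)| ≤ δ / (n + 1) := by
      intro n
      refine le_trans (hκ2 (φ n)).le ?_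
      apply div_le_div_of_nonneg_left hδ.le (by positivity)
      have : (n : ℝ) ≤ (φ n : ℝ) := by exact_mod_cast hφ.le_apply
      linarith
    have hdiv : Tendsto (fun n : ℕ => δ / (n + 1)) atTop (nhds 0) := by
      have h := (tendsto_const_div_atTop_nhds_zero_nat δ).comp (tendsto_add_atTop_nat 1)
      have heq : (fun n : ℕ => δ / (n + 1)) = (fun n : ℕ => δ / n) ∘ fun a => a + 1 := by
        funext n; simp [Function.comp]
      rw [heq]; exact h
    have habs : Tendsto (fun n => |κs (φ n)|) atTop (nhds 0) :=
      squeeze_zero (fun n => abs_nonneg _) hb hdiv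
    exact tendsto_zero_iff_abs_tendsto_zero _ |>.mpr habs
  -- the continuous function F
  have hFc : ContinuousOn (fun p : ℝ × ℝ => ρ p.1 * (GΩ (uinv p.1) (Z p.1 p.2)).im)
      ((Icc ξ₁m ξ₁p) ×ˢ (Ioo (-δ) δ)) := by
    have hG : ContinuousOn (fun p : ℝ × ℝ => ((p.1, Z p.1 p.2) : ℝ × ℂ))
        ((Icc ξ₁m ξ₁p) ×ˢ (Ioo (-δ) δ)) :=
      continuousOn_fst.prodMk hZcont
    have hmap : MapsTo (fun p : ℝ × ℝ => ((p.1, Z p.1 p.2) : ℝ × ℂ))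
        ((Icc ξ₁m ξ₁p) ×ˢ (Ioo (-δ) δ))
        {p : ℝ × ℂ | p.1 ∈ Icc ξ₁m ξ₁p ∧ p.2 ∈ Ω \ slitSet (uinv p.1 + ν)} := by
      intro p hp
      exact ⟨hp.1, (hZ p.1 hp.1 p.2 hp.2).2.1 (hZ p.1 hp.1 p.2 hp.2).1⟩
    have h1 := hcont.comp hG hmap
    have h2 := Complex.continuous_im.comp_continuousOn h1
    exact h2.congr (fun p hp => by simp [Complex.mul_im])
  have hmemD : ∀ n, ((xs (φ n), κs (φ n)) : ℝ × ℝ) ∈ (Icc ξ₁m ξ₁p) ×ˢ (Ioo (-δ) δ) :=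
    fun n => ⟨hI'sub (hxs _), hκmem _⟩
  have hlD : ((xl, 0) : ℝ × ℝ) ∈ (Icc ξ₁m ξ₁p) ×ˢ (Ioo (-δ) δ) :=
    Set.mk_mem_prod (hI'sub hxl) (show (0:ℝ) ∈ Ioo (-δ) δ from ⟨by linarith, hδ⟩)
  have htend : Tendsto (fun n => ((xs (φ n), κs (φ n)) : ℝ × ℝ)) atTop
      (nhdsWithin (xl, 0) ((Icc ξ₁m ξ₁p) ×ˢ (Ioo (-δ) δ))) :=
    tendsto_nhdsWithin_of_tendsto_nhds_of_eventually_within _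
      (hxtend.prodMk_nhds hκtend) (Eventually.of_forall hmemD)
  have hFtend : Tendsto
      (fun n => ρ (xs (φ n)) * (GΩ (uinv (xs (φ n))) (Z (xs (φ n)) (κs (φ n)))).im) atTop
      (nhds (ρ xl * (GΩ (uinv xl) (Z xl 0)).im)) :=
    Filter.Tendsto.comp (hFc (xl, 0) hlD) htend
  have hFzero : ∀ n, ρ (xs (φ n)) * (GΩ (uinv (xs (φ n))) (Z (xs (φ n)) (κs (φ n)))).im = 0 := by
    intro n
    have hxmem := hI'sub (hxs (φ n))
    have him1 := him (xs (φ n)) hxmem (κs (φ n)) (hκmem (φ n))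
    have hle := part1 (xs (φ n)) hxmem (κs (φ n)) (hκmem (φ n))
    have him00 : (Z (xs (φ n)) (κs (φ n))).im = 0 := le_antisymm hle (him0 (φ n))
    have hκne : κs (φ n) ≠ 0 := by
      intro h
      have := hκ1 (φ n)
      rw [h, abs_zero] at this
      exact lt_irrefl 0 this
    rw [him00] at him1
    have hmul : κs (φ n) ^ 2 *
        (ρ (xs (φ n)) * (GΩ (uinv (xs (φ n))) (Z (xs (φ n)) (κs (φ n)))).im) = 0 := by
      linarith
    exact (mul_eq_zero.mp hmul).resolve_left (pow_ne_zero 2 hκne)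
  have hF0 : ρ xl * (GΩ (uinv xl) (Z xl 0)).im = 0 := by
    have h := hFtend
    rw [show (fun n => ρ (xs (φ n)) * (GΩ (uinv (xs (φ n))) (Z (xs (φ n)) (κs (φ n)))).im)
        = fun _ : ℕ => (0 : ℝ) from funext hFzero] at h
    exact tendsto_nhds_unique h tendsto_const_nhds
  -- but F(xl, 0) ≠ 0
  have hx1 : xl ∈ Icc ξ₁m ξ₁p := hI'sub hxl
  have hZ0 : Z xl 0 = (xl : ℂ) := by
    have hE := (hZ xl hx1 0 (by constructor <;> linarith)).2.2
    push_cast at hE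
    linear_combination -hE
  have hyl : uinv xl ∈ Icc ξ₀m ξ₀p := huinv_maps hx1
  have hxa5 : uinv xl + ν < xl := ha5 xl hx1
  have hxΩ : ((xl : ℝ) : ℂ) ∈ Ω := by
    apply hΩ_sup
    rw [mem_Ioi]
    have := hyl.1
    linarith
  have hreal := hGΩ_real (uinv xl) hyl xl hxa5 hxΩ
  have hvCv : vC (uinv xl) ((xl : ℂ) - ((uinv xl : ℝ) : ℂ))
      = ((v (uinv xl) (xl - uinv xl) : ℝ) : ℂ) := by
    have h := hvC_agree (uinv xl) hyl (xl - uinv xl) (by rw [mem_Ioi]; linarith)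
    rw [← h]
    norm_cast
  have himval : (GΩ (uinv xl) ((xl : ℝ) : ℂ)).im = Real.pi * v (uinv xl) (xl - uinv xl) := by
    rw [hreal, hvCv]
    simp
  have hne : ρ xl * (GΩ (uinv xl) (Z xl 0)).im ≠ 0 := by
    rw [hZ0, himval]
    intro h
    apply hI'ne xl hxl
    rcases mul_eq_zero.mp h with h' | h'
    · rw [h', zero_mul]
    · rcases mul_eq_zero.mp h' with h'' | h''
      · exact absurd h'' Real.pi_ne_zero
      · rw [h'', mul_zero]
  exact hne hF0
end

section
/- There exists δ₄>0 such that M₁ := max over x∈I₁, |κ|≤δ₄ of |ϱ(x)𝒢_Ω(u⁻¹(x),ζ(x,κ))| and M₂ := max over x∈I₁, |κ|≤δ₄ of |ϱ(x)∂𝒢_Ω(u⁻¹(x),ζ(x,κ))/∂ζ| are finite, and for every κ with |κ| < δ₅ := min(δ₄,(2M₂)^{−1/2}) and every x∈I₁, writing ζ(x,κ)=ζ₁(x,κ)−iζ₂(x,κ) with ζ₁ real and ζ₂≥0: |ζ₁(x,κ)−x| ≤ 2M₁κ², 0 ≤ ζ₂(x,κ) ≤ 2M₁κ², |ζ(x,κ)−x|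 ≤ 2M₁κ², and |∂ζ(x,κ)/∂(κ²)| ≤ 2M₁. -/
open MeasureTheory Set Filter

set_option maxHeartbeats 1000000 in
/-- Lemma V.3: there is `δ₄ > 0` such that the maxima
`M₁ = max |ϱ𝒢_Ω(u⁻¹(x),ζ(x,κ))|` and `M₂ = max |ϱ∂𝒢_Ω(u⁻¹(x),ζ(x,κ))/∂ζ|` over
`x ∈ I₁`, `|κ| ≤ δ₄` exist (are finite), and for `|κ| < δ₅ = min(δ₄,(2M₂)^{-1/2})`,
writing `ζ = ζ₁ − iζ₂`: `|ζ₁−x| ≤ 2M₁κ²`, `0 ≤ ζ₂ ≤ 2M₁κ²`, `|ζ−x| ≤ 2M₁κ²` and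
`|∂ζ/∂(κ²)| ≤ 2M₁` (the latter expressed via `∂ζ/∂κ = 2κ·∂ζ/∂(κ²)` for `κ ≠ 0`). -/
theorem statement_11
    (ξ₀m ξ₀p ξ₁m ξ₁p ν C C₁ : ℝ)
    (hord : ξ₀m < ξ₀p ∧ ξ₀p < ξ₁m ∧ ξ₁m < ξ₁p) (hν : 0 ≤ ν) (hC : 0 < C) (hC₁ : 0 < C₁)
    (w₀ w₁ ω : ℝ → ℝ) (lam : ℝ → ℝ → ℂ)
    (hw₀_pos : ∀ᵐ y, y ∈ Icc ξ₀m ξ₀p → 0 < w₀ y)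
    (hw₁_pos : ∀ᵐ x, x ∈ Icc ξ₁m ξ₁p → 0 < w₁ x)
    (hw₀_int : IntegrableOn w₀ (Icc ξ₀m ξ₀p)) (hw₁_int : IntegrableOn w₁ (Icc ξ₁m ξ₁p))
    (hω_nonneg : ∀ᵐ z, z ∈ Ici ν → 0 ≤ ω z) (hω_int : IntegrableOn ω (Ici ν))
    -- (a1): `u : I₀ → I₁` is a bijective C¹-diffeomorphism, with inverse `uinv`
    (u uinv : ℝ → ℝ)
    (hu_bij : BijOn u (Icc ξ₀m ξ₀p) (Icc ξ₁m ξ₁p))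
    (hu_C1 : ContDiffOn ℝ 1 u (Icc ξ₀m ξ₀p))
    (huinv_C1 : ContDiffOn ℝ 1 uinv (Icc ξ₁m ξ₁p))
    (hu_inv : ∀ y ∈ Icc ξ₀m ξ₀p, uinv (u y) = y)
    (hinv_u : ∀ x ∈ Icc ξ₁m ξ₁p, u (uinv x) = x)
    (huinv_maps : MapsTo uinv (Icc ξ₁m ξ₁p) (Icc ξ₀m ξ₀p))
    (hu_deriv : ∀ y ∈ Icc ξ₀m ξ₀p, deriv u y ≠ 0)
    -- (a2)
    (v : ℝ → ℝ → ℝ)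
    (hv_def : ∀ y z, v y z = ‖lam y z‖ ^ 2 * ω z)
    (hlam_meas : Measurable fun p : ℝ × ℝ => lam p.1 p.2)
    (hv_intOn : ∀ y ∈ Icc ξ₀m ξ₀p, IntegrableOn (v y) (Ici ν))
    (hv_int : ∀ y ∈ Icc ξ₀m ξ₀p, (∫ z in Ici ν, v y z) ≤ C)
    (hw : ∀ y ∈ Icc ξ₀m ξ₀p, w₀ y ≤ C₁ * |deriv u y| * w₁ (u y))
    -- the Radon–Nikodým factor `ϱ`
    (ρ : ℝ → ℝ)
    (hρ : ∀ x ∈ Icc ξ₁m ξ₁p, ρ x = w₀ (uinv x) / (|deriv u (uinv x)| * w₁ x))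
    -- (a3): holomorphic extension of `v(y,·)` and the open set `Ω`
    (vC : ℝ → ℂ → ℂ) (Ωv : ℝ → Set ℂ) (Ω : Set ℂ)
    (hΩv_open : ∀ y ∈ Icc ξ₀m ξ₀p, IsOpen (Ωv y))
    (hΩv_sup : ∀ y ∈ Icc ξ₀m ξ₀p, ∀ z ∈ Ioi ν, (z : ℂ) ∈ Ωv y)
    (hvC_holo : ∀ y ∈ Icc ξ₀m ξ₀p, DifferentiableOn ℂ (vC y) (Ωv y))
    (hvC_agree : ∀ y ∈ Icc ξ₀m ξ₀p, ∀ z ∈ Ioi ν, vC y (z : ℂ) = (v y z : ℂ))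
    (hΩ_open : IsOpen Ω)
    (hΩ_sup : ∀ ξ ∈ Ioi (ξ₀m + ν), (ξ : ℂ) ∈ Ω)
    (hΩ_sub : ∀ y ∈ Icc ξ₀m ξ₀p, ∀ ζ ∈ Ω, ζ - (y : ℂ) ∈ Ωv y)
    -- the analytic continuation `𝒢_Ω` of `G` across the cut, and the principal value `I`
    (Ipv : ℝ → ℝ → ℝ)
    (hIpv : ∀ y ∈ Icc ξ₀m ξ₀p, ∀ ξ : ℝ, y + ν < ξ → HasPrincipalValue v ν y ξ (Ipv y ξ))
    (GΩ : ℝ → ℂ → ℂ)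
    (hGΩ_holo : ∀ y ∈ Icc ξ₀m ξ₀p, DifferentiableOn ℂ (GΩ y) (Ω \ slitSet (y + ν)))
    (hGΩ_up : ∀ y ∈ Icc ξ₀m ξ₀p, ∀ ζ ∈ Ω, 0 < ζ.im → GΩ y ζ = bandG v ν y ζ)
    (hGΩ_real : ∀ y ∈ Icc ξ₀m ξ₀p, ∀ ξ : ℝ, y + ν < ξ → (ξ : ℂ) ∈ Ω →
      GΩ y (ξ : ℂ) = (Ipv y ξ : ℂ) + Real.pi * Complex.I * vC y ((ξ : ℂ) - y))
    (hGΩ_low : ∀ y ∈ Icc ξ₀m ξ₀p, ∀ ζ ∈ Ω, ζ.im < 0 →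
      GΩ y ζ = bandG v ν y ζ + 2 * Real.pi * Complex.I * vC y (ζ - y))
    -- (a4): joint continuity
    (hcont : ContinuousOn (fun p : ℝ × ℂ => (ρ p.1 : ℂ) * GΩ (uinv p.1) p.2)
      {p : ℝ × ℂ | p.1 ∈ Icc ξ₁m ξ₁p ∧ p.2 ∈ Ω \ slitSet (uinv p.1 + ν)})
    (hcont' : ContinuousOn (fun p : ℝ × ℂ => (ρ p.1 : ℂ) * deriv (GΩ (uinv p.1)) p.2)
      {p : ℝ × ℂ | p.1 ∈ Icc ξ₁m ξ₁p ∧ p.2 ∈ Ω \ slitSet (uinv p.1 + ν)})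
    -- (a5)
    (ha5 : ∀ x ∈ Icc ξ₁m ξ₁p, uinv x + ν < x)
    -- the function `ζ(x,κ)` from the implicit-equation theorem
    (Δ δ : ℝ) (hΔ : 0 < Δ) (hδ : 0 < δ) (Z : ℝ → ℝ → ℂ)
    (hZ : ∀ x ∈ Icc ξ₁m ξ₁p, ∀ κ ∈ Ioo (-δ) δ,
      Z x κ ∈ cBox x Δ ∧ cBox x Δ ⊆ Ω \ slitSet (uinv x + ν) ∧
      (x : ℂ) - Z x κ - (κ : ℂ) ^ 2 * (ρ x : ℂ) * GΩ (uinv x) (Z x κ) = 0)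
    (hZcont : ContinuousOn (fun p : ℝ × ℝ => Z p.1 p.2) (Icc ξ₁m ξ₁p ×ˢ Ioo (-δ) δ))
    (hZsmooth : ∀ x ∈ Icc ξ₁m ξ₁p, ContDiffOn ℝ (⊤ : ℕ∞) (Z x) (Ioo (-δ) δ))
    (hZim : ∀ x ∈ Icc ξ₁m ξ₁p, ∀ κ ∈ Ioo (-δ) δ, (Z x κ).im ≤ 0) :
    ∃ δ₄ : ℝ, 0 < δ₄ ∧ δ₄ < δ ∧ ∃ M₁ M₂ : ℝ,
      IsGreatest ((fun p : ℝ × ℝ => ‖(ρ p.1 : ℂ) * GΩ (uinv p.1) (Z p.1 p.2)‖) ''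
        (Icc ξ₁m ξ₁p ×ˢ Icc (-δ₄) δ₄)) M₁ ∧
      IsGreatest ((fun p : ℝ × ℝ => ‖(ρ p.1 : ℂ) * deriv (GΩ (uinv p.1)) (Z p.1 p.2)‖) ''
        (Icc ξ₁m ξ₁p ×ˢ Icc (-δ₄) δ₄)) M₂ ∧
      ∀ κ : ℝ, |κ| < min δ₄ (Real.sqrt (2 * M₂))⁻¹ → ∀ x ∈ Icc ξ₁m ξ₁p,
        |(Z x κ).re - x| ≤ 2 * M₁ * κ ^ 2 ∧
        (0 ≤ -(Z x κ).im ∧ -(Z x κ).im ≤ 2 * M₁ * κ ^ 2) ∧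
        ‖Z x κ - (x : ℂ)‖ ≤ 2 * M₁ * κ ^ 2 ∧
        (κ ≠ 0 → ‖deriv (Z x) κ / (2 * (κ : ℂ))‖ ≤ 2 * M₁) := by
  classical
  obtain ⟨h01, h02, h12⟩ := hord
  have hδ₄pos : (0:ℝ) < δ/2 := by linarith
  refine ⟨δ/2, hδ₄pos, by linarith, ?_⟩
  have hIccκ : Icc (-(δ/2)) (δ/2) ⊆ Ioo (-δ) δ := by
    intro t ht
    exact ⟨by linarith [ht.1], by linarith [ht.2]⟩
  set K : Set (ℝ × ℝ) := Icc ξ₁m ξ₁p ×ˢ Icc (-(δ/2)) (δ/2) with hKdef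
  have hKc : IsCompact K := isCompact_Icc.prod isCompact_Icc
  have hKne : K.Nonempty := ⟨(ξ₁m, 0), ⟨le_refl _, h12.le⟩, ⟨by linarith, by linarith⟩⟩
  have hKsub : K ⊆ Icc ξ₁m ξ₁p ×ˢ Ioo (-δ) δ := Set.prod_mono (subset_refl _) hIccκ
  have hslit_closed : ∀ c : ℝ, IsClosed (slitSet c) := by
    intro c
    have : slitSet c = Complex.im ⁻¹' {0} ∩ Complex.re ⁻¹' Iic c := rfl
    rw [this]
    exact (isClosed_singleton.preimage Complex.continuous_im).inter
      (isClosed_Iic.preimage Complex.continuous_re)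
  have hmemS : ∀ x ∈ Icc ξ₁m ξ₁p, ∀ κ ∈ Ioo (-δ) δ,
      Z x κ ∈ Ω \ slitSet (uinv x + ν) := by
    intro x hx κ hκ
    exact (hZ x hx κ hκ).2.1 (hZ x hx κ hκ).1
  -- the map (x,κ) ↦ (x, Z x κ)
  have hφ : ContinuousOn (fun p : ℝ × ℝ => (p.1, Z p.1 p.2)) K :=
    (continuousOn_fst).prodMk (hZcont.mono hKsub)
  have hmaps : MapsTo (fun p : ℝ × ℝ => (p.1, Z p.1 p.2)) K
      {p : ℝ × ℂ | p.1 ∈ Icc ξ₁m ξ₁p ∧ p.2 ∈ Ω \ slitSet (uinv p.1 + ν)} := by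
    intro p hp
    exact ⟨hp.1, hmemS p.1 hp.1 p.2 (hIccκ hp.2)⟩
  have hf1 : ContinuousOn (fun p : ℝ × ℝ => ‖(ρ p.1 : ℂ) * GΩ (uinv p.1) (Z p.1 p.2)‖) K :=
    (hcont.comp hφ hmaps).norm
  have hf2 : ContinuousOn
      (fun p : ℝ × ℝ => ‖(ρ p.1 : ℂ) * deriv (GΩ (uinv p.1)) (Z p.1 p.2)‖) K :=
    (hcont'.comp hφ hmaps).norm
  obtain ⟨p₁, hp₁K, hmax1⟩ := hKc.exists_isMaxOn hKne hf1
  obtain ⟨p₂, hp₂K, hmax2⟩ := hKc.exists_isMaxOn hKne hf2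
  set M₁ := ‖(ρ p₁.1 : ℂ) * GΩ (uinv p₁.1) (Z p₁.1 p₁.2)‖ with hM₁def
  set M₂ := ‖(ρ p₂.1 : ℂ) * deriv (GΩ (uinv p₂.1)) (Z p₂.1 p₂.2)‖ with hM₂def
  have hM₁nn : 0 ≤ M₁ := norm_nonneg _
  have hM₂nn : 0 ≤ M₂ := norm_nonneg _
  refine ⟨M₁, M₂, ⟨⟨p₁, hp₁K, rfl⟩, ?_⟩, ⟨⟨p₂, hp₂K, rfl⟩, ?_⟩, ?_⟩
  · rintro m ⟨q, hq, rfl⟩; exact hmax1 hq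
  · rintro m ⟨q, hq, rfl⟩; exact hmax2 hq
  intro κ hκ x hx
  have hκ4 : |κ| ≤ δ/2 := le_of_lt (lt_of_lt_of_le hκ (min_le_left _ _))
  have hκIcc : κ ∈ Icc (-(δ/2)) (δ/2) := abs_le.mp hκ4
  have hκIoo : κ ∈ Ioo (-δ) δ := hIccκ hκIcc
  have hpK : (x, κ) ∈ K := ⟨hx, hκIcc⟩
  have hM1b : ‖(ρ x : ℂ) * GΩ (uinv x) (Z x κ)‖ ≤ M₁ := isMaxOn_iff.mp hmax1 (x, κ) hpK
  have hM2b : ‖(ρ x : ℂ) * deriv (GΩ (uinv x)) (Z x κ)‖ ≤ M₂ := isMaxOn_iff.mp hmax2 (x, κ) hpK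
  have hκsq : ‖((κ:ℂ))^2‖ = κ^2 := by simp [sq_abs]
  -- the basic equation
  have hEq := (hZ x hx κ hκIoo).2.2
  have hZsub : Z x κ - (x:ℂ) = -(((κ:ℂ))^2 * ((ρ x : ℂ) * GΩ (uinv x) (Z x κ))) := by
    linear_combination -hEq
  have hnorm : ‖Z x κ - (x:ℂ)‖ ≤ 2 * M₁ * κ^2 := by
    rw [hZsub, norm_neg, norm_mul, hκsq]
    nlinarith [norm_nonneg ((ρ x : ℂ) * GΩ (uinv x) (Z x κ)), sq_nonneg κ]
  have hre : |(Z x κ).re - x| ≤ 2 * M₁ * κ^2 := by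
    have h := Complex.abs_re_le_norm (Z x κ - (x:ℂ))
    simp only [Complex.sub_re, Complex.ofReal_re] at h
    calc |(Z x κ).re - x| ≤ ‖Z x κ - (x:ℂ)‖ := h
    _ = ‖Z x κ - (x:ℂ)‖ := rfl
    _ ≤ 2 * M₁ * κ^2 := hnorm
  have him0 : 0 ≤ -(Z x κ).im := by
    have := hZim x hx κ hκIoo; linarith
  have him : -(Z x κ).im ≤ 2 * M₁ * κ^2 := by
    have h := Complex.abs_im_le_norm (Z x κ - (x:ℂ))
    simp only [Complex.sub_im, Complex.ofReal_im, sub_zero] at h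
    have h2 : -(Z x κ).im ≤ |(Z x κ).im| := neg_le_abs _
    calc -(Z x κ).im ≤ |(Z x κ).im| := h2
    _ ≤ ‖Z x κ - (x:ℂ)‖ := h
    _ = ‖Z x κ - (x:ℂ)‖ := rfl
    _ ≤ 2 * M₁ * κ^2 := hnorm
  refine ⟨hre, ⟨him0, him⟩, hnorm, ?_⟩
  -- the derivative bound
  intro hκ0
  have hy : uinv x ∈ Icc ξ₀m ξ₀p := huinv_maps hx
  have hSopen : IsOpen (Ω \ slitSet (uinv x + ν)) := hΩ_open.sdiff (hslit_closed _)
  have hZmem : Z x κ ∈ Ω \ slitSet (uinv x + ν) := hmemS x hx κ hκIoo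
  have hgd : DifferentiableAt ℂ (GΩ (uinv x)) (Z x κ) :=
    (hGΩ_holo (uinv x) hy).differentiableAt (hSopen.mem_nhds hZmem)
  have hZd : HasDerivAt (Z x) (deriv (Z x) κ) κ := by
    have h := ((hZsmooth x hx).differentiableOn (by simp)).differentiableAt
      (isOpen_Ioo.mem_nhds hκIoo)
    exact h.hasDerivAt
  have hcomp : HasDerivAt (fun t => GΩ (uinv x) (Z x t))
      (deriv (Z x) κ • deriv (GΩ (uinv x)) (Z x κ)) κ :=
    HasDerivAt.scomp κ hgd.hasDerivAt hZd
  have hsq : HasDerivAt (fun t : ℝ => ((t:ℂ))^2) ((2*κ:ℝ):ℂ) κ := by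
    have h := (hasDerivAt_pow 2 κ).ofReal_comp
    simpa [Complex.ofReal_pow] using h
  have hprod : HasDerivAt (fun t : ℝ => ((t:ℂ))^2 * ((ρ x : ℂ) * GΩ (uinv x) (Z x t)))
      (((2*κ:ℝ):ℂ) * ((ρ x : ℂ) * GΩ (uinv x) (Z x κ)) +
        ((κ:ℂ))^2 * ((ρ x : ℂ) * (deriv (Z x) κ • deriv (GΩ (uinv x)) (Z x κ)))) κ :=
    hsq.mul (hcomp.const_mul _)
  have hF : HasDerivAt
      (fun t : ℝ => (x:ℂ) - Z x t - ((t:ℂ))^2 * ((ρ x : ℂ) * GΩ (uinv x) (Z x t)))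
      (0 - deriv (Z x) κ - (((2*κ:ℝ):ℂ) * ((ρ x : ℂ) * GΩ (uinv x) (Z x κ)) +
        ((κ:ℂ))^2 * ((ρ x : ℂ) * (deriv (Z x) κ • deriv (GΩ (uinv x)) (Z x κ))))) κ :=
    ((hasDerivAt_const κ ((x:ℂ))).sub hZd).sub hprod
  have hF0 : HasDerivAt (fun _ : ℝ => (0:ℂ))
      (0 - deriv (Z x) κ - (((2*κ:ℝ):ℂ) * ((ρ x : ℂ) * GΩ (uinv x) (Z x κ)) +
        ((κ:ℂ))^2 * ((ρ x : ℂ) * (deriv (Z x) κ • deriv (GΩ (uinv x)) (Z x κ))))) κ := by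
    refine hF.congr_of_eventuallyEq ?_
    filter_upwards [isOpen_Ioo.mem_nhds hκIoo] with t ht
    have h := (hZ x hx t ht).2.2
    linear_combination -h
  have hD0 : (0:ℂ) - deriv (Z x) κ - (((2*κ:ℝ):ℂ) * ((ρ x : ℂ) * GΩ (uinv x) (Z x κ)) +
      ((κ:ℂ))^2 * ((ρ x : ℂ) * (deriv (Z x) κ • deriv (GΩ (uinv x)) (Z x κ)))) = 0 :=
    hF0.unique (hasDerivAt_const κ (0:ℂ))
  rw [smul_eq_mul] at hD0
  set A : ℂ := ((κ:ℂ))^2 * ((ρ x : ℂ) * deriv (GΩ (uinv x)) (Z x κ)) with hAdef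
  have hkey : deriv (Z x) κ * (1 + A) =
      -(((2*κ:ℝ):ℂ)) * ((ρ x : ℂ) * GΩ (uinv x) (Z x κ)) := by
    rw [hAdef]; linear_combination -hD0
  -- bound on ‖A‖
  have hAnorm : ‖A‖ ≤ κ^2 * M₂ := by
    rw [hAdef, norm_mul, hκsq]
    have := sq_nonneg κ
    nlinarith
  have hκ2M₂ : κ^2 * M₂ < 1/2 := by
    rcases eq_or_lt_of_le hM₂nn with h | h
    · rw [← h]; norm_num
    · have hs : 0 < Real.sqrt (2*M₂) := Real.sqrt_pos.mpr (by linarith)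
      have hκlt : |κ| < (Real.sqrt (2*M₂))⁻¹ := lt_of_lt_of_le hκ (min_le_right _ _)
      have h1 : κ^2 < ((Real.sqrt (2*M₂))⁻¹)^2 := by
        have : |κ|^2 < ((Real.sqrt (2*M₂))⁻¹)^2 := by
          apply sq_lt_sq' _ hκlt
          have : 0 < (Real.sqrt (2*M₂))⁻¹ := inv_pos.mpr hs
          linarith [abs_nonneg κ]
        simpa [sq_abs] using this
      have h2 : ((Real.sqrt (2*M₂))⁻¹)^2 = (2*M₂)⁻¹ := by
        rw [inv_pow, Real.sq_sqrt (by linarith : (0:ℝ) ≤ 2*M₂)]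
      rw [h2] at h1
      calc κ^2 * M₂ < (2*M₂)⁻¹ * M₂ := by
            apply mul_lt_mul_of_pos_right h1 h
      _ = 1/2 := by field_simp
  have hAhalf : ‖A‖ < 1/2 := lt_of_le_of_lt hAnorm hκ2M₂
  have hB : (1:ℝ)/2 ≤ ‖1 + A‖ := by
    have h1 : ‖(1:ℂ)‖ ≤ ‖1 + A‖ + ‖A‖ := by
      calc ‖(1:ℂ)‖ = ‖(1 + A) - A‖ := by ring_nf
      _ ≤ ‖1 + A‖ + ‖A‖ := norm_sub_le _ _
    simp only [norm_one] at h1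
    linarith
  have hBne : (1 + A) ≠ 0 := by
    intro h; rw [h, norm_zero] at hB; linarith
  have h2κ : ((2*κ:ℝ):ℂ) ≠ 0 := by
    simp only [ne_eq, Complex.ofReal_eq_zero]
    intro h; exact hκ0 (by linarith)
  have hdiv : deriv (Z x) κ / (2 * (κ:ℂ)) =
      -((ρ x : ℂ) * GΩ (uinv x) (Z x κ)) / (1 + A) := by
    have h2κ' : (2:ℂ) * (κ:ℂ) ≠ 0 := by
      push_cast at h2κ; simpa [mul_comm] using h2κ
    rw [div_eq_div_iff h2κ' hBne]
    push_cast at hkey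
    linear_combination hkey
  rw [hdiv]
  rw [norm_div, norm_neg]
  rw [div_le_iff₀ (by linarith : (0:ℝ) < ‖1 + A‖)]
  nlinarith
end

section
/- Let 0 < α < α', let x ∈ ℝ, let 𝒢 be holomorphic on the open disk {ϑ∈ℂ : |ϑ−x| < α'}, and suppose |𝒢(ϑ)| ≤ M on the closed disk {|ϑ−x| ≤ α}. Let ζ₀ satisfy |ζ₀−x| < α/2. Define ℱ(ϑ) := (𝒢(ϑ) − 𝒢(ζ₀) − 𝒢'(ζ₀)(ϑ−ζ₀)) / (ϑ−ζ₀)², i.e. ℱ is the holomorphic function on the disk with 𝒢(ϑ) = 𝒢(ζ₀) + 𝒢'(ζ₀)(ϑ−ζ₀) + ℱ(ϑ)(ϑ−ζ₀)². Then for every ϑ in the open disk {|ϑ−x| < α/2} one has |ℱ(ϑ)| ≤ 8M/α² and |ℱ'(ϑ)| ≤ 16M/α³. -/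
/-!
Write `G z = p + q (z - a) + F z (z - a)²`. Against a Cauchy kernel `(z - b)^{-(n+1)}` the function
`F` integrates over the circle `|z - c| = R` to the same value as `G z (z - a)^{-2}`, because
`∮ (z - a)^{-m} (z - b)^{-k} = 0` whenever `m, k ≥ 1` (partial fractions reduce it to
`∮ (z - w)^{-1} = 2πi` and `∮ (z - w)^{-j} = 0` for `j ≥ 2`). For `n = 0, 1` the left side is
`2πi F(b)` and `2πi F'(b)`. If `a, b` lie in the disk of radius `R/2`, then
`|z - a|, |z - b| ≥ R/2` on the circle, and the standard estimate bounds the right side by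
`2πR · M (2/R)^{n+3}`.
-/

open Set Metric

namespace circleIntegral

open Complex Real

variable {c a b w : ℂ} {R : ℝ}

theorem continuousOn_inv_sub_pow (hw : w ∈ ball c R) (k : ℕ) :
    ContinuousOn (fun z => ((z - w) ^ k)⁻¹) (sphere c R) :=
  ((continuous_id.sub continuous_const).pow k).continuousOn.inv₀ fun _ hz =>
    pow_ne_zero k (sub_ne_zero.2 (sphere_disjoint_ball.ne_of_mem hz hw))

theorem integral_inv_sub_pow_eq_zero (c w : ℂ) (R : ℝ) {k : ℕ} (hk : 2 ≤ k) :
    (∮ z in C(c, R), ((z - w) ^ k)⁻¹) = 0 := by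
  simpa [zpow_neg] using integral_sub_zpow_of_ne (n := -k) (by omega) c w R

theorem integral_inv_sub_pow_mul_inv_sub_pow_succ (ha : a ∈ ball c R) (hb : b ∈ ball c R)
    (hab : a ≠ b) (m n : ℕ) :
    (∮ z in C(c, R), ((z - a) ^ (m + 1))⁻¹ * ((z - b) ^ (n + 1))⁻¹) =
      (a - b)⁻¹ * ((∮ z in C(c, R), ((z - a) ^ (m + 1))⁻¹ * ((z - b) ^ n)⁻¹) -
        ∮ z in C(c, R), ((z - a) ^ m)⁻¹ * ((z - b) ^ (n + 1))⁻¹) := by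
  have hR := (pos_of_mem_ball ha).le
  have hint : ∀ k l, CircleIntegrable (fun z => ((z - a) ^ k)⁻¹ * ((z - b) ^ l)⁻¹) c R :=
    fun k l =>
      ((continuousOn_inv_sub_pow ha k).mul (continuousOn_inv_sub_pow hb l)).circleIntegrable hR
  rw [← integral_sub (hint _ _) (hint _ _), ← integral_const_mul]
  refine integral_congr hR fun z hz => ?_
  have hza := sub_ne_zero.2 (sphere_disjoint_ball.ne_of_mem hz ha)
  have hzb := sub_ne_zero.2 (sphere_disjoint_ball.ne_of_mem hz hb)
  have hab' := sub_ne_zero.2 hab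
  field_simp
  ring

theorem integral_inv_sub_pow_mul_inv_sub_pow_eq_zero (ha : a ∈ ball c R) (hb : b ∈ ball c R)
    (m n : ℕ) : (∮ z in C(c, R), ((z - a) ^ (m + 1))⁻¹ * ((z - b) ^ (n + 1))⁻¹) = 0 := by
  rcases eq_or_ne a b with rfl | hab
  · simpa only [← mul_inv, ← pow_add] using integral_inv_sub_pow_eq_zero c a R (by omega)
  have hrec := integral_inv_sub_pow_mul_inv_sub_pow_succ ha hb hab
  have hpow : ∀ w k, (∮ z in C(c, R), ((z - w) ^ (k + 1 + 1))⁻¹) = 0 :=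
    fun w k => integral_inv_sub_pow_eq_zero c w R (by omega)
  induction m generalizing n with
  | zero =>
    induction n with
    | zero =>
      rw [hrec 0 0]
      simp only [pow_zero, inv_one, mul_one, one_mul, zero_add, pow_one,
        integral_sub_inv_of_mem_ball ha, integral_sub_inv_of_mem_ball hb, sub_self, mul_zero]
    | succ n ih =>
      simp only [hrec 0 (n + 1), ih, pow_zero, inv_one, one_mul, hpow, sub_self, mul_zero]
  | succ m ihm =>
    induction n with
    | zero =>
      simp only [hrec (m + 1) 0, ihm, pow_zero, inv_one, mul_one, hpow, sub_self, mul_zero]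
    | succ n ihn => simp only [hrec (m + 1) (n + 1), ihm, ihn, sub_self, mul_zero]

theorem integral_inv_sub_pow_smul_eq_of_taylor {F G : ℂ → ℂ} {p q : ℂ}
    (ha : a ∈ ball c R) (hb : b ∈ ball c R) (hF : ContinuousOn F (sphere c R))
    (hFG : ∀ z ∈ sphere c R, G z = p + q * (z - a) + F z * (z - a) ^ 2) (n : ℕ) :
    (∮ z in C(c, R), ((z - b) ^ (n + 1))⁻¹ • F z) =
      ∮ z in C(c, R), ((z - b) ^ (n + 1))⁻¹ * ((z - a) ^ 2)⁻¹ * G z := by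
  have hR := (pos_of_mem_ball ha).le
  have hkernel : ContinuousOn (fun z => ((z - b) ^ (n + 1))⁻¹ • F z) (sphere c R) :=
    (continuousOn_inv_sub_pow hb (n + 1)).smul hF
  have hpart : ∀ m r, ContinuousOn
      (fun z => r * (((z - a) ^ (m + 1))⁻¹ * ((z - b) ^ (n + 1))⁻¹)) (sphere c R) :=
    fun _ _ => continuousOn_const.mul
      ((continuousOn_inv_sub_pow ha _).mul (continuousOn_inv_sub_pow hb _))
  have hsplit : EqOn (fun z => ((z - b) ^ (n + 1))⁻¹ * ((z - a) ^ 2)⁻¹ * G z)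
      (fun z => ((z - b) ^ (n + 1))⁻¹ • F z
        + p * (((z - a) ^ (1 + 1))⁻¹ * ((z - b) ^ (n + 1))⁻¹)
        + q * (((z - a) ^ (0 + 1))⁻¹ * ((z - b) ^ (n + 1))⁻¹)) (sphere c R) := fun z hz => by
    have hza := sub_ne_zero.2 (sphere_disjoint_ball.ne_of_mem hz ha)
    simp only [hFG z hz, smul_eq_mul]
    field_simp
    ring
  rw [integral_congr hR hsplit, integral_add, integral_add, integral_const_mul, integral_const_mul,
    integral_inv_sub_pow_mul_inv_sub_pow_eq_zero ha hb,
    integral_inv_sub_pow_mul_inv_sub_pow_eq_zero ha hb, mul_zero, mul_zero, add_zero, add_zero]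
  exacts [hkernel.circleIntegrable hR, (hpart 1 p).circleIntegrable hR,
    (hkernel.add (hpart 1 p)).circleIntegrable hR, (hpart 0 q).circleIntegrable hR]

theorem half_le_norm_sub_of_mem_sphere_of_mem_ball_half {z : ℂ} (hz : z ∈ sphere c R)
    (hw : w ∈ ball c (R / 2)) : R / 2 ≤ ‖z - w‖ := by
  rw [mem_sphere_iff_norm] at hz
  rw [mem_ball_iff_norm] at hw
  have := norm_sub_norm_le (z - c) (w - c)
  rw [sub_sub_sub_cancel_right] at this
  linarith

theorem norm_integral_inv_sub_pow_mul_inv_sub_sq_mul_le {G : ℂ → ℂ} {M : ℝ}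
    (ha : a ∈ ball c (R / 2)) (hb : b ∈ ball c (R / 2))
    (hG : ∀ z ∈ sphere c R, ‖G z‖ ≤ M) (k : ℕ) :
    ‖∮ z in C(c, R), ((z - b) ^ k)⁻¹ * ((z - a) ^ 2)⁻¹ * G z‖ ≤
      2 * π * R * ((2 / R) ^ k * (2 / R) ^ 2 * M) := by
  have hR : 0 < R := by linarith [pos_of_mem_ball ha]
  have hinv : ∀ z ∈ sphere c R, ∀ w ∈ ball c (R / 2), ∀ j : ℕ,
      ‖((z - w) ^ j)⁻¹‖ ≤ (2 / R) ^ j := fun z hz w hw j => by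
      rw [norm_inv, norm_pow, ← inv_pow, ← inv_div R 2]
      gcongr
      exact half_le_norm_sub_of_mem_sphere_of_mem_ball_half hz hw
  refine norm_integral_le_of_norm_le_const hR.le fun z hz => ?_
  rw [norm_mul, norm_mul]
  gcongr
  · exact hinv z hz b hb k
  · exact hinv z hz a ha 2
  · exact hG z hz

theorem norm_two_pi_I_inv_smul_integral_inv_sub_pow_smul_le_of_taylor {F G : ℂ → ℂ}
    {p q : ℂ} {M : ℝ} (ha : a ∈ ball c (R / 2)) (hb : b ∈ ball c (R / 2))
    (hF : ContinuousOn F (sphere c R))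
    (hG : ∀ z ∈ sphere c R, ‖G z‖ ≤ M)
    (hFG : ∀ z ∈ sphere c R, G z = p + q * (z - a) + F z * (z - a) ^ 2) (n : ℕ) :
    ‖(2 * π * I : ℂ)⁻¹ • ∮ z in C(c, R), ((z - b) ^ (n + 1))⁻¹ • F z‖ ≤
      2 ^ (n + 3) * M / R ^ (n + 2) := by
  have hR : 0 < R := by linarith [pos_of_mem_ball ha]
  have hball : ball c (R / 2) ⊆ ball c R := ball_subset_ball (by linarith)
  have h2π : ‖(2 * π * I : ℂ)‖ = 2 * π := by simp [pi_pos.le]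
  rw [integral_inv_sub_pow_smul_eq_of_taylor (hball ha) (hball hb) hF hFG, norm_smul, norm_inv,
    h2π]
  calc (2 * π)⁻¹ * ‖∮ z in C(c, R), ((z - b) ^ (n + 1))⁻¹ * ((z - a) ^ 2)⁻¹ * G z‖
      ≤ (2 * π)⁻¹ * (2 * π * R * ((2 / R) ^ (n + 1) * (2 / R) ^ 2 * M)) := by
        gcongr
        exact norm_integral_inv_sub_pow_mul_inv_sub_sq_mul_le ha hb hG _
    _ = 2 ^ (n + 3) * M / R ^ (n + 2) := by
        rw [div_pow, div_pow]
        field_simp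
        ring

end circleIntegral

theorem statement_12_general
    (α α' x M : ℝ) (hα : 0 < α) (hαα' : α < α')
    (G : ℂ → ℂ) (ζ₀ : ℂ)
    (hG_bdd : ∀ ϑ ∈ closedBall (x : ℂ) α, ‖G ϑ‖ ≤ M)
    (hζ₀ : ‖ζ₀ - (x : ℂ)‖ < α / 2)
    (F : ℂ → ℂ)
    (hF_holo : DifferentiableOn ℂ F (ball (x : ℂ) α'))
    (hF_taylor : ∀ ϑ ∈ ball (x : ℂ) α',
      G ϑ = G ζ₀ + deriv G ζ₀ * (ϑ - ζ₀) + F ϑ * (ϑ - ζ₀) ^ 2) :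
    ∀ ϑ ∈ ball (x : ℂ) (α / 2),
      ‖F ϑ‖ ≤ 8 * M / α ^ 2 ∧ ‖deriv F ϑ‖ ≤ 16 * M / α ^ 3 := by
  intro ϑ hϑ
  have hdisk : closedBall (x : ℂ) α ⊆ ball (x : ℂ) α' := closedBall_subset_ball hαα'
  have hϑα : ϑ ∈ ball (x : ℂ) α := ball_subset_ball (by linarith) hϑ
  have bound := circleIntegral.norm_two_pi_I_inv_smul_integral_inv_sub_pow_smul_le_of_taylor
    (mem_ball_iff_norm.2 hζ₀) hϑ
    (hF_holo.continuousOn.mono (sphere_subset_closedBall.trans hdisk))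
    (fun z hz => hG_bdd z (sphere_subset_closedBall hz))
    (fun z hz => hF_taylor z (hdisk (sphere_subset_closedBall hz)))
  constructor
  · rw [← (hF_holo.diffContOnCl_ball hdisk).two_pi_i_inv_smul_circleIntegral_sub_inv_smul hϑα]
    simpa using (bound 0).trans_eq (by norm_num)
  · rw [← Complex.two_pi_I_inv_smul_circleIntegral_sub_sq_inv_smul_of_differentiable isOpen_ball
      hdisk hF_holo hϑα]
    simpa using (bound 1).trans_eq (by norm_num)

/-- Lemma V.4(v), quantitative Cauchy estimate: if `𝒢` is holomorphic
on the disk `{|ϑ−x| < α'}`, bounded by `M` on `{|ϑ−x| ≤ α}` with `0 < α < α'`, and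
`|ζ₀−x| < α/2`, then the second-order Taylor remainder factor `ℱ`, i.e. the holomorphic
function with `𝒢(ϑ) = 𝒢(ζ₀) + 𝒢'(ζ₀)(ϑ−ζ₀) + ℱ(ϑ)(ϑ−ζ₀)²`, satisfies
`|ℱ(ϑ)| ≤ 8M/α²` and `|ℱ'(ϑ)| ≤ 16M/α³` on `{|ϑ−x| < α/2}`. -/
theorem statement_12
    (α α' x M : ℝ) (hα : 0 < α) (hαα' : α < α')
    (G : ℂ → ℂ) (ζ₀ : ℂ)
    (hG_holo : DifferentiableOn ℂ G (ball (x : ℂ) α'))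
    (hG_bdd : ∀ ϑ ∈ closedBall (x : ℂ) α, ‖G ϑ‖ ≤ M)
    (hζ₀ : ‖ζ₀ - (x : ℂ)‖ < α / 2)
    (F : ℂ → ℂ)
    (hF_holo : DifferentiableOn ℂ F (ball (x : ℂ) α'))
    (hF_taylor : ∀ ϑ ∈ ball (x : ℂ) α',
      G ϑ = G ζ₀ + deriv G ζ₀ * (ϑ - ζ₀) + F ϑ * (ϑ - ζ₀) ^ 2) :
    ∀ ϑ ∈ ball (x : ℂ) (α / 2),
      ‖F ϑ‖ ≤ 8 * M / α ^ 2 ∧ ‖deriv F ϑ‖ ≤ 16 * M / α ^ 3 :=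
  statement_12_general α α' x M hα hαα' G ζ₀ hG_bdd hζ₀ F hF_holo hF_taylor
end

section
/- For every x∈I₁ with ϱ(x)≠0, every α,β ∈ (ν,∞) with α<β, and every κ with 0<|κ|<δ₂, there is a constant C_{x,α,β}>0, independent of ε, such that sup_{α<ξ<β} |g_x(ξ−iε)| ≤ C_{x,α,β} holds for all sufficiently small ε>0. -/
open MeasureTheory Set Filter

/-- `D±(x,κ,ζ) = x − ζ − κ²ϱ(x)·𝒢(u⁻¹(x),ζ)` for a continuation `𝒢` of `G`. -/
noncomputable def Dfun (ρ uinv : ℝ → ℝ) (GG : ℝ → ℂ → ℂ) (κ x : ℝ) (ζ : ℂ) : ℂ :=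
  (x : ℂ) - ζ - (κ : ℂ) ^ 2 * (ρ x : ℂ) * GG (uinv x) ζ

/-- `g_x(ζ) = κ²ϱ(x)v(u⁻¹(x),ζ)/(D₊(x,κ,ζ+u⁻¹(x))·D₋(x,κ,ζ+u⁻¹(x)))`. -/
noncomputable def gfun (ρ uinv : ℝ → ℝ) (GΩ GΩ' : ℝ → ℂ → ℂ) (vC : ℝ → ℂ → ℂ)
    (κ x : ℝ) (ζ : ℂ) : ℂ :=
  (κ : ℂ) ^ 2 * (ρ x : ℂ) * vC (uinv x) ζ /
    (Dfun ρ uinv GΩ κ x (ζ + (uinv x : ℂ)) * Dfun ρ uinv GΩ' κ x (ζ + (uinv x : ℂ)))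

/-- The open sector `D_{ν,θ} = {ζ : Re ζ > ν, −θ < arg ζ < 0}`. -/
def sector (ν θ : ℝ) : Set ℂ := {ζ : ℂ | ν < ζ.re ∧ -θ < ζ.arg ∧ ζ.arg < 0}

/-!
On the real axis the boundary values of `𝒢_Ω` and `𝒢^Ω` at `u⁻¹(x) + t` have imaginary parts
`± π v(u⁻¹(x), t)`, which are nonzero for `t > ν` by (a11); since `κ ϱ(x) ≠ 0`, neither `D₊` nor
`D₋` vanishes there. Numerator and denominator of `g_x` are continuous on an open neighbourhood
of the segment `[α, β]`, so `g_x` is bounded on a closed neighbourhood of it, and this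
neighbourhood contains `ξ − iε` for all `ξ ∈ (α, β)` and all small `ε > 0`.
-/

theorem IsCompact.exists_bound_on_cthickening_of_continuousOn {X E : Type*}
    [PseudoMetricSpace X] [ProperSpace X] [SeminormedAddGroup E] {K U : Set X} {f : X → E}
    (hK : IsCompact K) (hU : IsOpen U) (hKU : K ⊆ U) (hf : ContinuousOn f U) :
    ∃ δ > 0, ∃ B, ∀ z ∈ Metric.cthickening δ K, ‖f z‖ ≤ B := by
  obtain ⟨δ, hδ, hδU⟩ := hK.exists_cthickening_subset_open hU hKU
  exact ⟨δ, hδ, hK.cthickening.exists_bound_of_continuousOn (hf.mono hδU)⟩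

theorem IsCompact.exists_bound_div_on_cthickening {X 𝕜 : Type*}
    [PseudoMetricSpace X] [ProperSpace X] [NormedDivisionRing 𝕜] {K U : Set X} {f g : X → 𝕜}
    (hK : IsCompact K) (hU : IsOpen U) (hKU : K ⊆ U) (hf : ContinuousOn f U)
    (hg : ContinuousOn g U) (hg₀ : ∀ z ∈ K, g z ≠ 0) :
    ∃ δ > 0, ∃ B, ∀ z ∈ Metric.cthickening δ K, ‖f z / g z‖ ≤ B :=
  hK.exists_bound_on_cthickening_of_continuousOn (hg.isOpen_inter_preimage hU isOpen_ne)
    (fun z hz => ⟨hKU hz, hg₀ z hz⟩)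
    ((hf.mono inter_subset_left).div (hg.mono inter_subset_left) fun _ hz => hz.2)

theorem ofReal_sub_mul_I_mem_cthickening {s : Set ℝ} {t ε δ : ℝ} (ht : t ∈ s)
    (hε : |ε| ≤ δ) :
    (t : ℂ) - ε * Complex.I ∈ Metric.cthickening δ (((↑) : ℝ → ℂ) '' s) :=
  Metric.mem_cthickening_of_dist_le _ (t : ℂ) _ _ (mem_image_of_mem _ ht) (by simpa using hε)

theorem isClosed_slitSet (c : ℝ) : IsClosed (slitSet c) :=
  (isClosed_eq Complex.continuous_im continuous_const).inter
    (isClosed_le Complex.continuous_re continuous_const)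

section Dfun

variable {ρ uinv : ℝ → ℝ} {GG : ℝ → ℂ → ℂ} {κ x : ℝ}

theorem continuousOn_Dfun_comp_add_const {s : Set ℂ} (c : ℂ)
    (hG : ContinuousOn (GG (uinv x)) s) :
    ContinuousOn (fun ζ => Dfun ρ uinv GG κ x (ζ + c)) ((· + c) ⁻¹' s) := by
  have hG_shift : ContinuousOn (fun ζ => GG (uinv x) (ζ + c)) ((· + c) ⁻¹' s) :=
    hG.comp (continuous_add_const c).continuousOn (mapsTo_preimage _ _)
  exact (continuousOn_const.sub ((continuous_add_const c).continuousOn)).sub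
    (continuousOn_const.mul hG_shift)

theorem Dfun_ofReal_im (t : ℝ) :
    (Dfun ρ uinv GG κ x t).im = -(κ ^ 2 * ρ x * (GG (uinv x) t).im) := by
  simp [Dfun, Complex.mul_im, ← Complex.ofReal_pow]

theorem Dfun_ofReal_ne_zero (hκ : κ ≠ 0) (hρ : ρ x ≠ 0) {t : ℝ}
    (hG : (GG (uinv x) t).im ≠ 0) : Dfun ρ uinv GG κ x t ≠ 0 := fun h => by
  have := Dfun_ofReal_im (ρ := ρ) (uinv := uinv) (GG := GG) (κ := κ) (x := x) t
  simp [h, hκ, hρ, hG] at this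

theorem Dfun_mul_Dfun_ofReal_ne_zero {GΩ GΩ' : ℝ → ℂ → ℂ} {vC : ℝ → ℂ → ℂ}
    (hκ : κ ≠ 0) (hρ : ρ x ≠ 0) {t a w : ℝ} (hw : 0 < w)
    (hvC : vC (uinv x) t = w)
    (hGΩ : GΩ (uinv x) (t + uinv x : ℝ) = a + Real.pi * Complex.I * vC (uinv x) t)
    (hGΩ' : GΩ' (uinv x) (t + uinv x : ℝ) = a - Real.pi * Complex.I * vC (uinv x) t) :
    Dfun ρ uinv GΩ κ x (t + uinv x : ℝ) * Dfun ρ uinv GΩ' κ x (t + uinv x : ℝ) ≠ 0 := by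
  have hπw : Real.pi * w ≠ 0 := mul_ne_zero Real.pi_ne_zero hw.ne'
  refine mul_ne_zero (Dfun_ofReal_ne_zero hκ hρ ?_) (Dfun_ofReal_ne_zero hκ hρ ?_)
  · rw [hGΩ, hvC]; simpa using hπw
  · rw [hGΩ', hvC]; simpa using hπw

end Dfun

theorem statement_15_general
    (ξ₀m ξ₀p ξ₁m ξ₁p ν : ℝ)
    -- (a1): `u : I₀ → I₁` is a bijective C¹-diffeomorphism, with inverse `uinv`
    (uinv : ℝ → ℝ)
    (huinv_maps : MapsTo uinv (Icc ξ₁m ξ₁p) (Icc ξ₀m ξ₀p))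
    -- (a2)
    (v : ℝ → ℝ → ℝ)
    -- the Radon–Nikodým factor `ϱ`
    (ρ : ℝ → ℝ)
    -- (a3): holomorphic extension of `v(y,·)` and the open set `Ω`
    (vC : ℝ → ℂ → ℂ) (Ωv : ℝ → Set ℂ) (Ω : Set ℂ)
    (hvC_holo : ∀ y ∈ Icc ξ₀m ξ₀p, DifferentiableOn ℂ (vC y) (Ωv y))
    (hvC_agree : ∀ y ∈ Icc ξ₀m ξ₀p, ∀ z ∈ Ioi ν, vC y (z : ℂ) = (v y z : ℂ))
    (hΩ_open : IsOpen Ω)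
    (hΩ_sup : ∀ ξ ∈ Ioi (ξ₀m + ν), (ξ : ℂ) ∈ Ω)
    (hΩ_sub : ∀ y ∈ Icc ξ₀m ξ₀p, ∀ ζ ∈ Ω, ζ - (y : ℂ) ∈ Ωv y)
    -- the analytic continuation `𝒢_Ω` of `G` across the cut, and the principal value `I`
    (Ipv : ℝ → ℝ → ℝ)
    (GΩ : ℝ → ℂ → ℂ)
    (hGΩ_holo : ∀ y ∈ Icc ξ₀m ξ₀p, DifferentiableOn ℂ (GΩ y) (Ω \ slitSet (y + ν)))
    (hGΩ_real : ∀ y ∈ Icc ξ₀m ξ₀p, ∀ ξ : ℝ, y + ν < ξ → (ξ : ℂ) ∈ Ω →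
      GΩ y (ξ : ℂ) = (Ipv y ξ : ℂ) + Real.pi * Complex.I * vC y ((ξ : ℂ) - y))
    -- `𝒢^Ω`, the continuation of `G` from the lower half-plane
    (GΩ' : ℝ → ℂ → ℂ)
    (hGΩ'_holo : ∀ y ∈ Icc ξ₀m ξ₀p, DifferentiableOn ℂ (GΩ' y) (Ω \ slitSet (y + ν)))
    (hGΩ'_real : ∀ y ∈ Icc ξ₀m ξ₀p, ∀ ξ : ℝ, y + ν < ξ → (ξ : ℂ) ∈ Ω →
      GΩ' y (ξ : ℂ) = (Ipv y ξ : ℂ) - Real.pi * Complex.I * vC y ((ξ : ℂ) - y))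
    -- the coupling bound `δ₂` from the time-evolution theorem
    (δ₂ : ℝ)
    -- (a11): strict positivity of `v`
    (ha11 : ∀ y ∈ Icc ξ₀m ξ₀p, ∀ ξ : ℝ, ν < ξ → 0 < v y ξ) :
    ∀ x ∈ Icc ξ₁m ξ₁p, ρ x ≠ 0 → ∀ α β : ℝ, ν < α → α < β →
      ∀ κ : ℝ, 0 < |κ| → |κ| < δ₂ →
        ∃ Cxαβ > (0 : ℝ), ∀ᶠ (ε : ℝ) in nhdsWithin (0 : ℝ) (Ioi 0),
          ∀ ξ ∈ Ioo α β,
            ‖gfun ρ uinv GΩ GΩ' vC κ x ((ξ : ℂ) - (ε : ℂ) * Complex.I)‖ ≤ Cxαβ := by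
  intro x hx hρx α β hνα _ κ hκ0 _
  have hκ : κ ≠ 0 := abs_pos.mp hκ0
  set y := uinv x
  have hy : y ∈ Icc ξ₀m ξ₀p := huinv_maps hx
  set U : Set ℂ := (· + (y : ℂ)) ⁻¹' (Ω \ slitSet (y + ν))
  have hU : IsOpen U := (hΩ_open.sdiff (isClosed_slitSet _)).preimage (continuous_add_const _)
  have hΩ_real : ∀ t ∈ Icc α β, y + ν < t + y ∧ ((t + y : ℝ) : ℂ) ∈ Ω := fun t ht =>
    ⟨by linarith [ht.1], hΩ_sup _ (by simp only [mem_Ioi]; linarith [hy.1, ht.1])⟩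
  have hKU : ((↑) : ℝ → ℂ) '' Icc α β ⊆ U := by
    rintro _ ⟨t, ht, rfl⟩
    refine ⟨by simpa using (hΩ_real t ht).2, fun hslit => ?_⟩
    simpa using hslit.2.trans_lt (hΩ_real t ht).1
  have hvC_cont : ContinuousOn (vC y) U := (hvC_holo y hy).continuousOn.mono
    fun ζ hζ => by simpa using hΩ_sub y hy _ hζ.1
  have hden : ∀ z ∈ ((↑) : ℝ → ℂ) '' Icc α β,
      Dfun ρ uinv GΩ κ x (z + y) * Dfun ρ uinv GΩ' κ x (z + y) ≠ 0 := by
    rintro _ ⟨t, ht, rfl⟩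
    obtain ⟨hty, htΩ⟩ := hΩ_real t ht
    have hνt : ν < t := hνα.trans_le ht.1
    have hshift : ((t + y : ℝ) : ℂ) - y = t := by push_cast; ring
    simpa using Dfun_mul_Dfun_ofReal_ne_zero hκ hρx (ha11 y hy t hνt) (hvC_agree y hy t hνt)
      (by rw [hGΩ_real y hy _ hty htΩ, hshift]) (by rw [hGΩ'_real y hy _ hty htΩ, hshift])
  obtain ⟨δ, hδ, B, hB⟩ :=
    (isCompact_Icc.image Complex.continuous_ofReal).exists_bound_div_on_cthickening hU hKU
      (f := fun ζ => (κ : ℂ) ^ 2 * ρ x * vC y ζ) (continuousOn_const.mul hvC_cont)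
      ((continuousOn_Dfun_comp_add_const _ (hGΩ_holo y hy).continuousOn).mul
        (continuousOn_Dfun_comp_add_const _ (hGΩ'_holo y hy).continuousOn)) hden
  refine ⟨max B 1, by positivity, ?_⟩
  filter_upwards [Ioo_mem_nhdsGT hδ] with ε hε ξ hξ
  have hεδ : |ε| ≤ δ := by rw [abs_of_pos hε.1]; exact hε.2.le
  exact (hB _ (ofReal_sub_mul_I_mem_cthickening (Ioo_subset_Icc_self hξ) hεδ)).trans
    (le_max_left _ _)

/-- Lemma VI.3: for `x ∈ I₁` with `ϱ(x) ≠ 0`, `ν < α < β` and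
`0 < |κ| < δ₂` there is a constant `C_{x,α,β} > 0`, independent of `ε`, with
`sup_{α<ξ<β} |g_x(ξ−iε)| ≤ C_{x,α,β}` for all sufficiently small `ε > 0`. -/
theorem statement_15
    (ξ₀m ξ₀p ξ₁m ξ₁p ν C C₁ : ℝ)
    (hord : ξ₀m < ξ₀p ∧ ξ₀p < ξ₁m ∧ ξ₁m < ξ₁p) (hν : 0 ≤ ν) (hC : 0 < C) (hC₁ : 0 < C₁)
    (w₀ w₁ ω : ℝ → ℝ) (lam : ℝ → ℝ → ℂ)
    (hw₀_pos : ∀ᵐ y, y ∈ Icc ξ₀m ξ₀p → 0 < w₀ y)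
    (hw₁_pos : ∀ᵐ x, x ∈ Icc ξ₁m ξ₁p → 0 < w₁ x)
    (hw₀_int : IntegrableOn w₀ (Icc ξ₀m ξ₀p)) (hw₁_int : IntegrableOn w₁ (Icc ξ₁m ξ₁p))
    (hω_nonneg : ∀ᵐ z, z ∈ Ici ν → 0 ≤ ω z) (hω_int : IntegrableOn ω (Ici ν))
    -- (a1): `u : I₀ → I₁` is a bijective C¹-diffeomorphism, with inverse `uinv`
    (u uinv : ℝ → ℝ)
    (hu_bij : BijOn u (Icc ξ₀m ξ₀p) (Icc ξ₁m ξ₁p))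
    (hu_C1 : ContDiffOn ℝ 1 u (Icc ξ₀m ξ₀p))
    (huinv_C1 : ContDiffOn ℝ 1 uinv (Icc ξ₁m ξ₁p))
    (hu_inv : ∀ y ∈ Icc ξ₀m ξ₀p, uinv (u y) = y)
    (hinv_u : ∀ x ∈ Icc ξ₁m ξ₁p, u (uinv x) = x)
    (huinv_maps : MapsTo uinv (Icc ξ₁m ξ₁p) (Icc ξ₀m ξ₀p))
    (hu_deriv : ∀ y ∈ Icc ξ₀m ξ₀p, deriv u y ≠ 0)
    -- (a2)
    (v : ℝ → ℝ → ℝ)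
    (hv_def : ∀ y z, v y z = ‖lam y z‖ ^ 2 * ω z)
    (hlam_meas : Measurable fun p : ℝ × ℝ => lam p.1 p.2)
    (hv_int : ∀ y ∈ Icc ξ₀m ξ₀p, (∫ z in Ici ν, v y z) ≤ C)
    (hw : ∀ y ∈ Icc ξ₀m ξ₀p, w₀ y ≤ C₁ * |deriv u y| * w₁ (u y))
    -- the Radon–Nikodým factor `ϱ`
    (ρ : ℝ → ℝ)
    (hρ : ∀ x ∈ Icc ξ₁m ξ₁p, ρ x = w₀ (uinv x) / (|deriv u (uinv x)| * w₁ x))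
    -- (a3): holomorphic extension of `v(y,·)` and the open set `Ω`
    (vC : ℝ → ℂ → ℂ) (Ωv : ℝ → Set ℂ) (Ω : Set ℂ)
    (hΩv_open : ∀ y ∈ Icc ξ₀m ξ₀p, IsOpen (Ωv y))
    (hΩv_sup : ∀ y ∈ Icc ξ₀m ξ₀p, ∀ z ∈ Ioi ν, (z : ℂ) ∈ Ωv y)
    (hvC_holo : ∀ y ∈ Icc ξ₀m ξ₀p, DifferentiableOn ℂ (vC y) (Ωv y))
    (hvC_agree : ∀ y ∈ Icc ξ₀m ξ₀p, ∀ z ∈ Ioi ν, vC y (z : ℂ) = (v y z : ℂ))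
    (hΩ_open : IsOpen Ω)
    (hΩ_sup : ∀ ξ ∈ Ioi (ξ₀m + ν), (ξ : ℂ) ∈ Ω)
    (hΩ_sub : ∀ y ∈ Icc ξ₀m ξ₀p, ∀ ζ ∈ Ω, ζ - (y : ℂ) ∈ Ωv y)
    -- the analytic continuation `𝒢_Ω` of `G` across the cut, and the principal value `I`
    (Ipv : ℝ → ℝ → ℝ)
    (hIpv : ∀ y ∈ Icc ξ₀m ξ₀p, ∀ ξ : ℝ, y + ν < ξ → HasPrincipalValue v ν y ξ (Ipv y ξ))
    (GΩ : ℝ → ℂ → ℂ)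
    (hGΩ_holo : ∀ y ∈ Icc ξ₀m ξ₀p, DifferentiableOn ℂ (GΩ y) (Ω \ slitSet (y + ν)))
    (hGΩ_up : ∀ y ∈ Icc ξ₀m ξ₀p, ∀ ζ ∈ Ω, 0 < ζ.im → GΩ y ζ = bandG v ν y ζ)
    (hGΩ_real : ∀ y ∈ Icc ξ₀m ξ₀p, ∀ ξ : ℝ, y + ν < ξ → (ξ : ℂ) ∈ Ω →
      GΩ y (ξ : ℂ) = (Ipv y ξ : ℂ) + Real.pi * Complex.I * vC y ((ξ : ℂ) - y))
    (hGΩ_low : ∀ y ∈ Icc ξ₀m ξ₀p, ∀ ζ ∈ Ω, ζ.im < 0 →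
      GΩ y ζ = bandG v ν y ζ + 2 * Real.pi * Complex.I * vC y (ζ - y))
    -- (a4): joint continuity
    (hcont : ContinuousOn (fun p : ℝ × ℂ => (ρ p.1 : ℂ) * GΩ (uinv p.1) p.2)
      {p : ℝ × ℂ | p.1 ∈ Icc ξ₁m ξ₁p ∧ p.2 ∈ Ω \ slitSet (uinv p.1 + ν)})
    (hcont' : ContinuousOn (fun p : ℝ × ℂ => (ρ p.1 : ℂ) * deriv (GΩ (uinv p.1)) p.2)
      {p : ℝ × ℂ | p.1 ∈ Icc ξ₁m ξ₁p ∧ p.2 ∈ Ω \ slitSet (uinv p.1 + ν)})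
    -- (a5)
    (ha5 : ∀ x ∈ Icc ξ₁m ξ₁p, uinv x + ν < x)
    -- regularity of `v` and (a6), (a7)
    (hv_intOn : ∀ y ∈ Icc ξ₀m ξ₀p, IntegrableOn (v y) (Ici ν))
    (hv_diff : ∀ y ∈ Icc ξ₀m ξ₀p, ∀ z ∈ Ioi ν, DifferentiableAt ℝ (v y) z)
    (C₂ C₃ : ℝ) (hC₂ : 0 < C₂) (hC₃ : 0 < C₃)
    (ha6 : ∀ y ∈ Icc ξ₀m ξ₀p, ∀ z ∈ Ici ν, v y z ≤ C₂)
    (ha6' : ∀ y ∈ Icc ξ₀m ξ₀p, ∀ z ∈ Ici ν, |deriv (v y) z| ≤ C₃)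
    (ha7 : ∀ y ∈ Icc ξ₀m ξ₀p, v y ν = 0)
    -- (a8)
    (N : Set ℝ) (hN_sub : N ⊆ Icc ξ₁m ξ₁p) (hN_null : MeasureTheory.volume N = 0)
    (ν₁ : ℝ) (hν₁_pos : 0 < ν₁)
    (hν₁_gt : ∀ x ∈ Icc ξ₁m ξ₁p, x - uinv x - ν < ν₁)
    (ha8 : ∀ x ∈ Icc ξ₁m ξ₁p \ N, ∀ ξ ∈ Ioo ν (ν + ν₁), 0 < ρ x * v (uinv x) ξ)
    -- `𝒢^Ω`, the continuation of `G` from the lower half-plane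
    (GΩ' : ℝ → ℂ → ℂ)
    (hGΩ'_holo : ∀ y ∈ Icc ξ₀m ξ₀p, DifferentiableOn ℂ (GΩ' y) (Ω \ slitSet (y + ν)))
    (hGΩ'_up : ∀ y ∈ Icc ξ₀m ξ₀p, ∀ ζ ∈ Ω, 0 < ζ.im →
      GΩ' y ζ = bandG v ν y ζ - 2 * Real.pi * Complex.I * vC y (ζ - y))
    (hGΩ'_real : ∀ y ∈ Icc ξ₀m ξ₀p, ∀ ξ : ℝ, y + ν < ξ → (ξ : ℂ) ∈ Ω →
      GΩ' y (ξ : ℂ) = (Ipv y ξ : ℂ) - Real.pi * Complex.I * vC y ((ξ : ℂ) - y))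
    (hGΩ'_low : ∀ y ∈ Icc ξ₀m ξ₀p, ∀ ζ ∈ Ω, ζ.im < 0 → GΩ' y ζ = bandG v ν y ζ)
    -- the coupling bound `δ₂` from the time-evolution theorem
    (δ₂ : ℝ) (hδ₂ : 0 < δ₂)
    -- (a10): the closed sector lies in `Ω(v) = ⋂_{y∈I₀}(Ω−y)`
    (θ₀ : ℝ) (hθ₀ : 0 < θ₀ ∧ θ₀ < Real.pi / 4)
    (ha10 : closure (sector ν θ₀) ⊆ {ζ : ℂ | ∀ y ∈ Icc ξ₀m ξ₀p, ζ + (y : ℂ) ∈ Ω})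
    -- (a11): strict positivity of `v`
    (ha11 : ∀ y ∈ Icc ξ₀m ξ₀p, ∀ ξ : ℝ, ν < ξ → 0 < v y ξ) :
    ∀ x ∈ Icc ξ₁m ξ₁p, ρ x ≠ 0 → ∀ α β : ℝ, ν < α → α < β →
      ∀ κ : ℝ, 0 < |κ| → |κ| < δ₂ →
        ∃ Cxαβ > (0 : ℝ), ∀ᶠ (ε : ℝ) in nhdsWithin (0 : ℝ) (Ioi 0),
          ∀ ξ ∈ Ioo α β,
            ‖gfun ρ uinv GΩ GΩ' vC κ x ((ξ : ℂ) - (ε : ℂ) * Complex.I)‖ ≤ Cxαβ :=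
  statement_15_general ξ₀m ξ₀p ξ₁m ξ₁p ν uinv huinv_maps v ρ vC Ωv Ω hvC_holo hvC_agree hΩ_open
    hΩ_sup hΩ_sub Ipv GΩ hGΩ_holo hGΩ_real GΩ' hGΩ'_holo hGΩ'_real δ₂ ha11
end

section
/- For every x∈I₁ and every κ with 0<|κ|<δ₂, there is a constant C₁₀>0, independent of ζ, such that |g_x(ζ)| ≤ C₁₀/|ζ|^{2+q_y} holds for all ζ in the sector D_{ν,θ₀} = {ζ∈ℂ : Re ζ>ν, −θ₀<arg ζ<0} with |ζ| sufficiently large, where y=u⁻¹(x) and q_y is the decay exponent from assumption (a12). -/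
/-! For large `ζ` in the sector, `ζ + y` lies in the lower half-plane with `Re ζ ≥ ν + 1`, where
`𝒢^Ω(y, ζ + y) = G(y, ζ + y)` and `𝒢_Ω(y, ζ + y) = G(y, ζ + y) + 2πi v(y, ζ)`. There the Cauchy
integral `G(y, ζ + y) = ∫ v(y,z)/(z − ζ) dz` is bounded uniformly in `ζ`: away from `Re ζ` the
kernel has modulus at most one, and on `(Re ζ − 1, Re ζ + 1)` one subtracts `v(y, Re ζ)`, which
leaves a difference quotient bounded by `sup |∂v|` and `v(y, Re ζ) ∫ dz/(z − ζ)`, a difference of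
logarithms of equal modulus. Hence `|D±(x, κ, ζ + y)| ≥ |ζ|/2` for large `ζ`, while the numerator
of `g_x` decays like `|ζ|^{-q_y}` by (a12). -/

open MeasureTheory Set Filter

lemma ofReal_sub_ne_zero {ζ : ℂ} (hζ : ζ.im ≠ 0) (z : ℝ) : (z : ℂ) - ζ ≠ 0 := by
  intro h
  apply hζ
  simpa using congrArg Complex.im h

lemma MeasureTheory.Measure.nonneg_on_open_of_ae_nonneg {X : Type*} [TopologicalSpace X]
    [MeasurableSpace X] [OpensMeasurableSpace X] {μ : Measure X} [μ.IsOpenPosMeasure] {U : Set X}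
    (hU : IsOpen U) {f : X → ℝ} (hf : ContinuousOn f U) (h : ∀ᵐ z ∂μ.restrict U, 0 ≤ f z) :
    ∀ z ∈ U, 0 ≤ f z := by
  have heq : EqOn f (fun z => max (f z) 0) U :=
    eqOn_open_of_ae_eq (h.mono fun z hz => (max_eq_left hz).symm) hU hf
      (hf.sup continuousOn_const)
  exact fun z hz => (heq hz).symm ▸ le_max_right _ _

lemma integral_inv_ofReal_sub {ζ : ℂ} (hζ : ζ.im ≠ 0) (a b : ℝ) :
    ∫ z in a..b, ((z : ℂ) - ζ)⁻¹ = Complex.log ((b : ℂ) - ζ) - Complex.log ((a : ℂ) - ζ) := by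
  have hderiv (z : ℝ) : HasDerivAt (fun t : ℝ => Complex.log ((t : ℂ) - ζ)) ((z : ℂ) - ζ)⁻¹ z := by
    have hslit : (z : ℂ) - ζ ∈ Complex.slitPlane :=
      Complex.mem_slitPlane_iff.2 (Or.inr (by simpa using hζ))
    simpa using ((Complex.hasDerivAt_log hslit).comp (z : ℂ)
      ((hasDerivAt_id (z : ℂ)).sub_const ζ)).comp_ofReal
  refine intervalIntegral.integral_eq_sub_of_hasDerivAt (fun z _ => hderiv z)
    (Continuous.intervalIntegrable ?_ _ _)
  exact (Complex.continuous_ofReal.sub continuous_const).inv₀ (ofReal_sub_ne_zero hζ)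

lemma norm_log_sub_log_le_of_norm_eq {w₁ w₂ : ℂ} (h : ‖w₁‖ = ‖w₂‖) :
    ‖Complex.log w₁ - Complex.log w₂‖ ≤ 2 * Real.pi := by
  have hre : (Complex.log w₁ - Complex.log w₂).re = 0 := by simp [Complex.log_re, h]
  calc ‖Complex.log w₁ - Complex.log w₂‖
      ≤ |(Complex.log w₁ - Complex.log w₂).re| + |(Complex.log w₁ - Complex.log w₂).im| :=
        Complex.norm_le_abs_re_add_abs_im _
    _ = |w₁.arg - w₂.arg| := by simp [hre, Complex.log_im]
    _ ≤ |w₁.arg| + |w₂.arg| := abs_sub _ _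
    _ ≤ 2 * Real.pi := by linarith [Complex.abs_arg_le_pi w₁, Complex.abs_arg_le_pi w₂]

lemma norm_integral_Ioo_inv_ofReal_sub_le {ζ : ℂ} (hζ : ζ.im ≠ 0) {r : ℝ} (hr : 0 ≤ r) :
    ‖∫ z in Ioo (ζ.re - r) (ζ.re + r), ((z : ℂ) - ζ)⁻¹‖ ≤ 2 * Real.pi := by
  rw [← integral_Ioc_eq_integral_Ioo, ← intervalIntegral.integral_of_le (by linarith),
    integral_inv_ofReal_sub hζ]
  refine norm_log_sub_log_le_of_norm_eq ?_
  simp only [Complex.norm_def, Complex.normSq_apply, Complex.sub_re, Complex.ofReal_re,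
    Complex.sub_im, Complex.ofReal_im]
  ring_nf

section CauchyTransform

variable {f : ℝ → ℝ} {ζ : ℂ}

lemma abs_sub_re_le_norm_ofReal_sub (z : ℝ) : |z - ζ.re| ≤ ‖(z : ℂ) - ζ‖ := by
  simpa using Complex.abs_re_le_norm ((z : ℂ) - ζ)

lemma integrableOn_div_ofReal_sub {s : Set ℝ} (hf : IntegrableOn f s) (hζ : ζ.im ≠ 0) :
    IntegrableOn (fun z : ℝ => (f z : ℂ) / ((z : ℂ) - ζ)) s := by
  have hbound (z : ℝ) : ‖((z : ℂ) - ζ)⁻¹‖ ≤ |ζ.im|⁻¹ := by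
    rw [norm_inv]
    refine inv_anti₀ (abs_pos.2 hζ) ?_
    simpa using Complex.abs_im_le_norm ((z : ℂ) - ζ)
  have hcont : Continuous fun z : ℝ => ((z : ℂ) - ζ)⁻¹ :=
    (Complex.continuous_ofReal.sub continuous_const).inv₀ (ofReal_sub_ne_zero hζ)
  exact (hf.ofReal.mul_bdd hcont.aestronglyMeasurable (ae_of_all _ hbound)).congr
    (ae_of_all _ fun z => by simp [div_eq_mul_inv])

lemma norm_setIntegral_div_ofReal_sub_le_of_far {s : Set ℝ} (hs : MeasurableSet s)
    (hf : IntegrableOn f s) (hfar : ∀ z ∈ s, 1 ≤ |z - ζ.re|) :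
    ‖∫ z in s, (f z : ℂ) / ((z : ℂ) - ζ)‖ ≤ ∫ z in s, |f z| := by
  refine norm_integral_le_of_norm_le hf.abs (ae_restrict_of_forall_mem hs fun z hz => ?_)
  rw [norm_div, Complex.norm_real, Real.norm_eq_abs]
  exact div_le_self (abs_nonneg _) ((hfar z hz).trans (abs_sub_re_le_norm_ofReal_sub z))

lemma norm_setIntegral_Ioo_sub_div_ofReal_sub_le {L : ℝ} (hL : 0 ≤ L) (hζ : ζ.im ≠ 0)
    (hlip : ∀ z ∈ Ioo (ζ.re - 1) (ζ.re + 1), |f z - f ζ.re| ≤ L * |z - ζ.re|) :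
    ‖∫ z in Ioo (ζ.re - 1) (ζ.re + 1), ((f z : ℂ) - f ζ.re) / ((z : ℂ) - ζ)‖ ≤ 2 * L := by
  have hpoint : ∀ z ∈ Ioo (ζ.re - 1) (ζ.re + 1),
      ‖((f z : ℂ) - f ζ.re) / ((z : ℂ) - ζ)‖ ≤ L := by
    intro z hz
    rw [← Complex.ofReal_sub, norm_div, Complex.norm_real, Real.norm_eq_abs,
      div_le_iff₀ (norm_pos_iff.2 (ofReal_sub_ne_zero hζ z))]
    exact (hlip z hz).trans (mul_le_mul_of_nonneg_left (abs_sub_re_le_norm_ofReal_sub z) hL)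
  have hvol : volume.real (Ioo (ζ.re - 1) (ζ.re + 1)) = 2 := by
    rw [Real.volume_real_Ioo_of_le (by linarith)]
    ring
  simpa [hvol, mul_comm] using
    norm_setIntegral_le_of_norm_le_const (measure_Ioo_lt_top (μ := volume)) hpoint

lemma norm_integral_Ioi_div_ofReal_sub_le {ν L : ℝ} (hf : IntegrableOn f (Ioi ν))
    (hdiff : ∀ z ∈ Ioi ν, DifferentiableAt ℝ f z) (hderiv : ∀ z ∈ Ioi ν, |deriv f z| ≤ L)
    (hζ : ζ.im ≠ 0) (hre : ν + 1 ≤ ζ.re) :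
    ‖∫ z in Ioi ν, (f z : ℂ) / ((z : ℂ) - ζ)‖ ≤
      (∫ z in Ioi ν, |f z|) + 2 * L + 2 * Real.pi * |f ζ.re| := by
  set ξ := ζ.re
  set S := Ioo (ξ - 1) (ξ + 1)
  have hξ : ξ ∈ Ioi ν := show ν < ξ by linarith
  have hS : S ⊆ Ioi ν := fun z hz => show ν < z by linarith [hz.1]
  have hL : 0 ≤ L := (abs_nonneg _).trans (hderiv ξ hξ)
  have hlip (z) (hz : z ∈ S) : |f z - f ξ| ≤ L * |z - ξ| := by
    simpa [Real.norm_eq_abs] using Convex.norm_image_sub_le_of_norm_deriv_le hdiff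
      (fun w hw => hderiv w hw) (convex_Ioi ν) hξ (hS hz)
  have hint := integrableOn_div_ofReal_sub hf hζ
  have hconst : IntegrableOn (fun z : ℝ => (f ξ : ℂ) / ((z : ℂ) - ζ)) S :=
    integrableOn_div_ofReal_sub (integrableOn_const (by simp [S, Real.volume_Ioo])) hζ
  have hnear : ∫ z in S, (f z : ℂ) / ((z : ℂ) - ζ) =
      (∫ z in S, ((f z : ℂ) - f ξ) / ((z : ℂ) - ζ)) + f ξ * ∫ z in S, ((z : ℂ) - ζ)⁻¹ := by
    have h := integral_add ((hint.mono_set hS).sub hconst) hconst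
    simp only [Pi.sub_apply, sub_add_cancel] at h
    rw [h, ← integral_const_mul]
    simp only [div_eq_mul_inv, sub_mul]
  have hsplit : ∫ z in Ioi ν, (f z : ℂ) / ((z : ℂ) - ζ) =
      (∫ z in Ioi ν \ S, (f z : ℂ) / ((z : ℂ) - ζ)) + ∫ z in S, (f z : ℂ) / ((z : ℂ) - ζ) := by
    rw [← setIntegral_union (s := Ioi ν \ S) (t := S) disjoint_sdiff_left measurableSet_Ioo
      (hint.mono_set sdiff_subset) (hint.mono_set hS), sdiff_union_of_subset hS]
  have hfar : ‖∫ z in Ioi ν \ S, (f z : ℂ) / ((z : ℂ) - ζ)‖ ≤ ∫ z in Ioi ν, |f z| := by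
    refine (norm_setIntegral_div_ofReal_sub_le_of_far (measurableSet_Ioi.diff measurableSet_Ioo)
      (hf.mono_set sdiff_subset) fun z hz => ?_).trans
      (setIntegral_mono_set hf.abs (ae_of_all _ fun _ => abs_nonneg _) sdiff_subset.eventuallyLE)
    by_contra! h
    exact hz.2 (abs_sub_lt_iff.1 h |>.elim fun h₁ h₂ => ⟨by linarith, by linarith⟩)
  have hlog : ‖(f ξ : ℂ) * ∫ z in S, ((z : ℂ) - ζ)⁻¹‖ ≤ 2 * Real.pi * |f ξ| := by
    rw [norm_mul, Complex.norm_real, Real.norm_eq_abs, mul_comm]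
    exact mul_le_mul_of_nonneg_right (norm_integral_Ioo_inv_ofReal_sub_le hζ zero_le_one)
      (abs_nonneg _)
  rw [hsplit, hnear]
  refine (norm_add_le _ _).trans ((add_le_add hfar (norm_add_le _ _)).trans ?_)
  linarith [norm_setIntegral_Ioo_sub_div_ofReal_sub_le hL hζ hlip]

end CauchyTransform

lemma bandG_add_ofReal (v : ℝ → ℝ → ℝ) (ν y : ℝ) (ζ : ℂ) :
    bandG v ν y (ζ + y) = ∫ z in Ioi ν, (v y z : ℂ) / ((z : ℂ) - ζ) := by
  unfold bandG
  congr 1 with z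
  ring_nf

lemma norm_bandG_add_ofReal_le {v : ℝ → ℝ → ℝ} {ν y C₂ C₃ : ℝ} {ζ : ℂ}
    (hint : IntegrableOn (v y) (Ioi ν)) (hdiff : ∀ z ∈ Ioi ν, DifferentiableAt ℝ (v y) z)
    (hderiv : ∀ z ∈ Ioi ν, |deriv (v y) z| ≤ C₃) (hnonneg : ∀ z ∈ Ioi ν, 0 ≤ v y z)
    (hbound : ∀ z ∈ Ioi ν, v y z ≤ C₂) (hζ : ζ.im ≠ 0) (hre : ν + 1 ≤ ζ.re) :
    ‖bandG v ν y (ζ + y)‖ ≤ (∫ z in Ioi ν, v y z) + 2 * C₃ + 2 * Real.pi * C₂ := by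
  have hre' : ζ.re ∈ Ioi ν := show ν < ζ.re by linarith
  rw [bandG_add_ofReal, ← setIntegral_congr_fun measurableSet_Ioi fun z hz =>
    abs_of_nonneg (hnonneg z hz)]
  refine (norm_integral_Ioi_div_ofReal_sub_le hint hdiff hderiv hζ hre).trans ?_
  rw [abs_of_nonneg (hnonneg _ hre')]
  gcongr
  exact hbound _ hre'

lemma nonneg_of_eq_norm_sq_mul {g ω : ℝ → ℝ} {lam : ℝ → ℂ} {ν : ℝ}
    (hg : ∀ z, g z = ‖lam z‖ ^ 2 * ω z) (hω : ∀ᵐ z, z ∈ Ici ν → 0 ≤ ω z)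
    (hcont : ContinuousOn g (Ioi ν)) : ∀ z ∈ Ioi ν, 0 ≤ g z := by
  refine Measure.nonneg_on_open_of_ae_nonneg (μ := volume) isOpen_Ioi hcont
    ((ae_restrict_iff' measurableSet_Ioi).2 (hω.mono fun z hωz hz => ?_))
  rw [hg]
  exact mul_nonneg (sq_nonneg _) (hωz (Ioi_subset_Ici_self hz))

lemma norm_add_two_pi_I_mul_le {G w : ℂ} {M c : ℝ} (hG : ‖G‖ ≤ M) (hw : ‖w‖ ≤ c) :
    ‖G + 2 * Real.pi * Complex.I * w‖ ≤ M + 2 * Real.pi * c := by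
  refine (norm_add_le _ _).trans (add_le_add hG ?_)
  rw [norm_mul]
  gcongr
  simp [abs_of_pos Real.pi_pos]

lemma le_re_of_mem_sector {ν θ c : ℝ} {ζ : ℂ} (hζ : ζ ∈ sector ν θ) (hθ : θ < Real.pi / 2)
    (hc : c / Real.cos θ ≤ ‖ζ‖) : c ≤ ζ.re := by
  obtain ⟨-, harg_gt, harg_lt⟩ := hζ
  have hcos : 0 < Real.cos θ := Real.cos_pos_of_mem_Ioo ⟨by linarith, hθ⟩
  have hcos_le : Real.cos θ ≤ Real.cos ζ.arg := by
    rw [← Real.cos_abs ζ.arg]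
    exact Real.cos_le_cos_of_nonneg_of_le_pi (abs_nonneg _) (by linarith)
      (abs_le.2 ⟨by linarith, by linarith⟩)
  calc c ≤ ‖ζ‖ * Real.cos θ := (div_le_iff₀ hcos).1 hc
    _ ≤ ‖ζ‖ * Real.cos ζ.arg := mul_le_mul_of_nonneg_left hcos_le (norm_nonneg _)
    _ = ζ.re := Complex.norm_mul_cos_arg ζ

lemma half_norm_le_norm_Dfun {ρ uinv : ℝ → ℝ} {GG : ℝ → ℂ → ℂ} {κ x M : ℝ} {ζ : ℂ}
    (hGG : ‖GG (uinv x) (ζ + uinv x)‖ ≤ M)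
    (hζ : 2 * (|x - uinv x| + κ ^ 2 * |ρ x| * M) ≤ ‖ζ‖) :
    ‖ζ‖ / 2 ≤ ‖Dfun ρ uinv GG κ x (ζ + uinv x)‖ := by
  have hshift : Dfun ρ uinv GG κ x (ζ + uinv x) =
      -(ζ - (((x - uinv x : ℝ) : ℂ) - (κ : ℂ) ^ 2 * (ρ x : ℂ) * GG (uinv x) (ζ + uinv x))) := by
    unfold Dfun
    push_cast
    ring
  have hpert : ‖((x - uinv x : ℝ) : ℂ) - (κ : ℂ) ^ 2 * (ρ x : ℂ) * GG (uinv x) (ζ + uinv x)‖ ≤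
      |x - uinv x| + κ ^ 2 * |ρ x| * M := by
    refine (norm_sub_le _ _).trans (add_le_add (by rw [Complex.norm_real, Real.norm_eq_abs]) ?_)
    simp only [norm_mul, norm_pow, Complex.norm_real, Real.norm_eq_abs, sq_abs]
    gcongr
  rw [hshift, norm_neg]
  linarith [norm_sub_norm_le ζ
    (((x - uinv x : ℝ) : ℂ) - (κ : ℂ) ^ 2 * (ρ x : ℂ) * GG (uinv x) (ζ + uinv x))]

lemma norm_div_mul_le_of_decay {a b c : ℂ} {A K q : ℝ} (hA : 0 < A)
    (ha : ‖a‖ ≤ K * A ^ (-q)) (hb : A / 2 ≤ ‖b‖) (hc : A / 2 ≤ ‖c‖) :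
    ‖a / (b * c)‖ ≤ 4 * K / A ^ (2 + q) := by
  rw [norm_div, norm_mul]
  calc ‖a‖ / (‖b‖ * ‖c‖) ≤ K * A ^ (-q) / (A / 2 * (A / 2)) :=
        div_le_div₀ ((norm_nonneg a).trans ha) ha (by positivity) (mul_le_mul hb hc
          (by positivity) (norm_nonneg b))
    _ = 4 * K / A ^ (2 + q) := by
        rw [Real.rpow_neg hA.le, Real.rpow_add hA, Real.rpow_two]
        field_simp
        ring

theorem statement_16_general
    (ξ₀m ξ₀p ξ₁m ξ₁p ν : ℝ)
    (ω : ℝ → ℝ) (lam : ℝ → ℝ → ℂ)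
    (hω_nonneg : ∀ᵐ z, z ∈ Ici ν → 0 ≤ ω z)
    -- (a1): `u : I₀ → I₁` is a bijective C¹-diffeomorphism, with inverse `uinv`
    (uinv : ℝ → ℝ)
    (huinv_maps : MapsTo uinv (Icc ξ₁m ξ₁p) (Icc ξ₀m ξ₀p))
    -- (a2)
    (v : ℝ → ℝ → ℝ)
    (hv_def : ∀ y z, v y z = ‖lam y z‖ ^ 2 * ω z)
    -- the Radon–Nikodým factor `ϱ`
    (ρ : ℝ → ℝ)
    -- (a3): holomorphic extension of `v(y,·)` and the open set `Ω`
    (vC : ℝ → ℂ → ℂ) (Ω : Set ℂ)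
    -- the analytic continuation `𝒢_Ω` of `G` across the cut, and the principal value `I`
    (GΩ : ℝ → ℂ → ℂ)
    (hGΩ_low : ∀ y ∈ Icc ξ₀m ξ₀p, ∀ ζ ∈ Ω, ζ.im < 0 →
      GΩ y ζ = bandG v ν y ζ + 2 * Real.pi * Complex.I * vC y (ζ - y))
    -- regularity of `v` and (a6), (a7)
    (hv_intOn : ∀ y ∈ Icc ξ₀m ξ₀p, IntegrableOn (v y) (Ici ν))
    (hv_diff : ∀ y ∈ Icc ξ₀m ξ₀p, ∀ z ∈ Ioi ν, DifferentiableAt ℝ (v y) z)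
    (C₂ C₃ : ℝ)
    (ha6 : ∀ y ∈ Icc ξ₀m ξ₀p, ∀ z ∈ Ici ν, v y z ≤ C₂)
    (ha6' : ∀ y ∈ Icc ξ₀m ξ₀p, ∀ z ∈ Ici ν, |deriv (v y) z| ≤ C₃)
    -- `𝒢^Ω`, the continuation of `G` from the lower half-plane
    (GΩ' : ℝ → ℂ → ℂ)
    (hGΩ'_low : ∀ y ∈ Icc ξ₀m ξ₀p, ∀ ζ ∈ Ω, ζ.im < 0 → GΩ' y ζ = bandG v ν y ζ)
    -- the coupling bound `δ₂` from the time-evolution theorem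
    (δ₂ : ℝ)
    -- (a10): the closed sector lies in `Ω(v) = ⋂_{y∈I₀}(Ω−y)`
    (θ₀ : ℝ) (hθ₀ : 0 < θ₀ ∧ θ₀ < Real.pi / 4)
    (ha10 : closure (sector ν θ₀) ⊆ {ζ : ℂ | ∀ y ∈ Icc ξ₀m ξ₀p, ζ + (y : ℂ) ∈ Ω})
    -- (a12): power decay of `v(y,·)` in `Ω(v)`
    (Cy qy : ℝ → ℝ)
    (ha12 : ∀ y ∈ Icc ξ₀m ξ₀p, 0 < Cy y ∧ 0 < qy y ∧
      ∀ ζ : ℂ, (∀ y' ∈ Icc ξ₀m ξ₀p, ζ + (y' : ℂ) ∈ Ω) →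
        ‖vC y ζ‖ < Cy y * ‖ζ‖ ^ (-(qy y))) :
    ∀ x ∈ Icc ξ₁m ξ₁p, ∀ κ : ℝ, 0 < |κ| → |κ| < δ₂ →
      ∃ C₁₀ > (0 : ℝ), ∃ R : ℝ, ∀ ζ ∈ sector ν θ₀, R ≤ ‖ζ‖ →
        ‖gfun ρ uinv GΩ GΩ' vC κ x ζ‖ ≤ C₁₀ / ‖ζ‖ ^ (2 + qy (uinv x)) := by
  intro x hx κ _ _
  set y := uinv x
  have hy : y ∈ Icc ξ₀m ξ₀p := huinv_maps hx
  obtain ⟨hCy, hqy, hdecay⟩ := ha12 y hy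
  have hv_nonneg := nonneg_of_eq_norm_sq_mul (hv_def y) hω_nonneg
    fun z hz => (hv_diff y hy z hz).continuousAt.continuousWithinAt
  set MG := (∫ z in Ioi ν, v y z) + 2 * C₃ + 2 * Real.pi * C₂ + 2 * Real.pi * Cy y
  -- the `+ 1` keeps `C₁₀` positive when `ρ x = 0`
  set K := κ ^ 2 * |ρ x| * Cy y + 1
  refine ⟨4 * K, by positivity, max (max 1 ((ν + 1) / Real.cos θ₀))
    (2 * (|x - y| + κ ^ 2 * |ρ x| * MG)), fun ζ hζ hR => ?_⟩
  simp only [max_le_iff] at hR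
  have hζΩ := ha10 (subset_closure hζ)
  have hlow : (ζ + y).im < 0 := by simpa using Complex.arg_neg_iff.1 hζ.2.2
  have hv : ‖vC y ζ‖ ≤ Cy y * ‖ζ‖ ^ (-qy y) := (hdecay ζ hζΩ).le
  have hv₁ : ‖vC y ζ‖ ≤ Cy y := hv.trans (mul_le_of_le_one_right hCy.le
    (Real.rpow_le_one_of_one_le_of_nonpos hR.1.1 (neg_nonpos.2 hqy.le)))
  have hband := norm_bandG_add_ofReal_le (hv_intOn y hy |>.mono_set Ioi_subset_Ici_self)
    (hv_diff y hy) (fun z hz => ha6' y hy z (Ioi_subset_Ici_self hz)) hv_nonneg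
    (fun z hz => ha6 y hy z (Ioi_subset_Ici_self hz)) (by simpa using hlow.ne)
    (le_re_of_mem_sector hζ (by linarith [hθ₀.2, Real.pi_pos]) hR.1.2)
  have hG : ‖GΩ y (ζ + y)‖ ≤ MG := by
    rw [hGΩ_low y hy _ (hζΩ y hy) hlow, add_sub_cancel_right]
    exact norm_add_two_pi_I_mul_le hband hv₁
  have hG' : ‖GΩ' y (ζ + y)‖ ≤ MG := by
    rw [hGΩ'_low y hy _ (hζΩ y hy) hlow]
    linarith [mul_pos Real.two_pi_pos hCy]
  have hnum : ‖(κ : ℂ) ^ 2 * (ρ x : ℂ) * vC y ζ‖ ≤ K * ‖ζ‖ ^ (-qy y) := by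
    simp only [norm_mul, norm_pow, Complex.norm_real, Real.norm_eq_abs, sq_abs]
    nlinarith [Real.rpow_nonneg (norm_nonneg ζ) (-qy y),
      mul_nonneg (sq_nonneg κ) (abs_nonneg (ρ x))]
  exact norm_div_mul_le_of_decay (by linarith [hR.1.1]) hnum
    (half_norm_le_norm_Dfun hG hR.2) (half_norm_le_norm_Dfun hG' hR.2)

/-- Lemma VI.4: for `x ∈ I₁` and `0 < |κ| < δ₂` there is `C₁₀ > 0`,
independent of `ζ`, with `|g_x(ζ)| ≤ C₁₀/|ζ|^{2+q_y}`, `y = u⁻¹(x)`, for all `ζ` in the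
sector `D_{ν,θ₀}` of sufficiently large modulus. -/
theorem statement_16
    (ξ₀m ξ₀p ξ₁m ξ₁p ν C C₁ : ℝ)
    (hord : ξ₀m < ξ₀p ∧ ξ₀p < ξ₁m ∧ ξ₁m < ξ₁p) (hν : 0 ≤ ν) (hC : 0 < C) (hC₁ : 0 < C₁)
    (w₀ w₁ ω : ℝ → ℝ) (lam : ℝ → ℝ → ℂ)
    (hw₀_pos : ∀ᵐ y, y ∈ Icc ξ₀m ξ₀p → 0 < w₀ y)
    (hw₁_pos : ∀ᵐ x, x ∈ Icc ξ₁m ξ₁p → 0 < w₁ x)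
    (hw₀_int : IntegrableOn w₀ (Icc ξ₀m ξ₀p)) (hw₁_int : IntegrableOn w₁ (Icc ξ₁m ξ₁p))
    (hω_nonneg : ∀ᵐ z, z ∈ Ici ν → 0 ≤ ω z) (hω_int : IntegrableOn ω (Ici ν))
    -- (a1): `u : I₀ → I₁` is a bijective C¹-diffeomorphism, with inverse `uinv`
    (u uinv : ℝ → ℝ)
    (hu_bij : BijOn u (Icc ξ₀m ξ₀p) (Icc ξ₁m ξ₁p))
    (hu_C1 : ContDiffOn ℝ 1 u (Icc ξ₀m ξ₀p))
    (huinv_C1 : ContDiffOn ℝ 1 uinv (Icc ξ₁m ξ₁p))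
    (hu_inv : ∀ y ∈ Icc ξ₀m ξ₀p, uinv (u y) = y)
    (hinv_u : ∀ x ∈ Icc ξ₁m ξ₁p, u (uinv x) = x)
    (huinv_maps : MapsTo uinv (Icc ξ₁m ξ₁p) (Icc ξ₀m ξ₀p))
    (hu_deriv : ∀ y ∈ Icc ξ₀m ξ₀p, deriv u y ≠ 0)
    -- (a2)
    (v : ℝ → ℝ → ℝ)
    (hv_def : ∀ y z, v y z = ‖lam y z‖ ^ 2 * ω z)
    (hlam_meas : Measurable fun p : ℝ × ℝ => lam p.1 p.2)
    (hv_int : ∀ y ∈ Icc ξ₀m ξ₀p, (∫ z in Ici ν, v y z) ≤ C)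
    (hw : ∀ y ∈ Icc ξ₀m ξ₀p, w₀ y ≤ C₁ * |deriv u y| * w₁ (u y))
    -- the Radon–Nikodým factor `ϱ`
    (ρ : ℝ → ℝ)
    (hρ : ∀ x ∈ Icc ξ₁m ξ₁p, ρ x = w₀ (uinv x) / (|deriv u (uinv x)| * w₁ x))
    -- (a3): holomorphic extension of `v(y,·)` and the open set `Ω`
    (vC : ℝ → ℂ → ℂ) (Ωv : ℝ → Set ℂ) (Ω : Set ℂ)
    (hΩv_open : ∀ y ∈ Icc ξ₀m ξ₀p, IsOpen (Ωv y))
    (hΩv_sup : ∀ y ∈ Icc ξ₀m ξ₀p, ∀ z ∈ Ioi ν, (z : ℂ) ∈ Ωv y)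
    (hvC_holo : ∀ y ∈ Icc ξ₀m ξ₀p, DifferentiableOn ℂ (vC y) (Ωv y))
    (hvC_agree : ∀ y ∈ Icc ξ₀m ξ₀p, ∀ z ∈ Ioi ν, vC y (z : ℂ) = (v y z : ℂ))
    (hΩ_open : IsOpen Ω)
    (hΩ_sup : ∀ ξ ∈ Ioi (ξ₀m + ν), (ξ : ℂ) ∈ Ω)
    (hΩ_sub : ∀ y ∈ Icc ξ₀m ξ₀p, ∀ ζ ∈ Ω, ζ - (y : ℂ) ∈ Ωv y)
    -- the analytic continuation `𝒢_Ω` of `G` across the cut, and the principal value `I`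
    (Ipv : ℝ → ℝ → ℝ)
    (hIpv : ∀ y ∈ Icc ξ₀m ξ₀p, ∀ ξ : ℝ, y + ν < ξ → HasPrincipalValue v ν y ξ (Ipv y ξ))
    (GΩ : ℝ → ℂ → ℂ)
    (hGΩ_holo : ∀ y ∈ Icc ξ₀m ξ₀p, DifferentiableOn ℂ (GΩ y) (Ω \ slitSet (y + ν)))
    (hGΩ_up : ∀ y ∈ Icc ξ₀m ξ₀p, ∀ ζ ∈ Ω, 0 < ζ.im → GΩ y ζ = bandG v ν y ζ)
    (hGΩ_real : ∀ y ∈ Icc ξ₀m ξ₀p, ∀ ξ : ℝ, y + ν < ξ → (ξ : ℂ) ∈ Ω →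
      GΩ y (ξ : ℂ) = (Ipv y ξ : ℂ) + Real.pi * Complex.I * vC y ((ξ : ℂ) - y))
    (hGΩ_low : ∀ y ∈ Icc ξ₀m ξ₀p, ∀ ζ ∈ Ω, ζ.im < 0 →
      GΩ y ζ = bandG v ν y ζ + 2 * Real.pi * Complex.I * vC y (ζ - y))
    -- (a4): joint continuity
    (hcont : ContinuousOn (fun p : ℝ × ℂ => (ρ p.1 : ℂ) * GΩ (uinv p.1) p.2)
      {p : ℝ × ℂ | p.1 ∈ Icc ξ₁m ξ₁p ∧ p.2 ∈ Ω \ slitSet (uinv p.1 + ν)})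
    (hcont' : ContinuousOn (fun p : ℝ × ℂ => (ρ p.1 : ℂ) * deriv (GΩ (uinv p.1)) p.2)
      {p : ℝ × ℂ | p.1 ∈ Icc ξ₁m ξ₁p ∧ p.2 ∈ Ω \ slitSet (uinv p.1 + ν)})
    -- (a5)
    (ha5 : ∀ x ∈ Icc ξ₁m ξ₁p, uinv x + ν < x)
    -- regularity of `v` and (a6), (a7)
    (hv_intOn : ∀ y ∈ Icc ξ₀m ξ₀p, IntegrableOn (v y) (Ici ν))
    (hv_diff : ∀ y ∈ Icc ξ₀m ξ₀p, ∀ z ∈ Ioi ν, DifferentiableAt ℝ (v y) z)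
    (C₂ C₃ : ℝ) (hC₂ : 0 < C₂) (hC₃ : 0 < C₃)
    (ha6 : ∀ y ∈ Icc ξ₀m ξ₀p, ∀ z ∈ Ici ν, v y z ≤ C₂)
    (ha6' : ∀ y ∈ Icc ξ₀m ξ₀p, ∀ z ∈ Ici ν, |deriv (v y) z| ≤ C₃)
    (ha7 : ∀ y ∈ Icc ξ₀m ξ₀p, v y ν = 0)
    -- (a8)
    (N : Set ℝ) (hN_sub : N ⊆ Icc ξ₁m ξ₁p) (hN_null : MeasureTheory.volume N = 0)
    (ν₁ : ℝ) (hν₁_pos : 0 < ν₁)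
    (hν₁_gt : ∀ x ∈ Icc ξ₁m ξ₁p, x - uinv x - ν < ν₁)
    (ha8 : ∀ x ∈ Icc ξ₁m ξ₁p \ N, ∀ ξ ∈ Ioo ν (ν + ν₁), 0 < ρ x * v (uinv x) ξ)
    -- `𝒢^Ω`, the continuation of `G` from the lower half-plane
    (GΩ' : ℝ → ℂ → ℂ)
    (hGΩ'_holo : ∀ y ∈ Icc ξ₀m ξ₀p, DifferentiableOn ℂ (GΩ' y) (Ω \ slitSet (y + ν)))
    (hGΩ'_up : ∀ y ∈ Icc ξ₀m ξ₀p, ∀ ζ ∈ Ω, 0 < ζ.im →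
      GΩ' y ζ = bandG v ν y ζ - 2 * Real.pi * Complex.I * vC y (ζ - y))
    (hGΩ'_real : ∀ y ∈ Icc ξ₀m ξ₀p, ∀ ξ : ℝ, y + ν < ξ → (ξ : ℂ) ∈ Ω →
      GΩ' y (ξ : ℂ) = (Ipv y ξ : ℂ) - Real.pi * Complex.I * vC y ((ξ : ℂ) - y))
    (hGΩ'_low : ∀ y ∈ Icc ξ₀m ξ₀p, ∀ ζ ∈ Ω, ζ.im < 0 → GΩ' y ζ = bandG v ν y ζ)
    -- the coupling bound `δ₂` from the time-evolution theorem
    (δ₂ : ℝ) (hδ₂ : 0 < δ₂)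
    -- (a10): the closed sector lies in `Ω(v) = ⋂_{y∈I₀}(Ω−y)`
    (θ₀ : ℝ) (hθ₀ : 0 < θ₀ ∧ θ₀ < Real.pi / 4)
    (ha10 : closure (sector ν θ₀) ⊆ {ζ : ℂ | ∀ y ∈ Icc ξ₀m ξ₀p, ζ + (y : ℂ) ∈ Ω})
    -- (a12): power decay of `v(y,·)` in `Ω(v)`
    (Cy qy : ℝ → ℝ)
    (ha12 : ∀ y ∈ Icc ξ₀m ξ₀p, 0 < Cy y ∧ 0 < qy y ∧
      ∀ ζ : ℂ, (∀ y' ∈ Icc ξ₀m ξ₀p, ζ + (y' : ℂ) ∈ Ω) →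
        ‖vC y ζ‖ < Cy y * ‖ζ‖ ^ (-(qy y))) :
    ∀ x ∈ Icc ξ₁m ξ₁p, ∀ κ : ℝ, 0 < |κ| → |κ| < δ₂ →
      ∃ C₁₀ > (0 : ℝ), ∃ R : ℝ, ∀ ζ ∈ sector ν θ₀, R ≤ ‖ζ‖ →
        ‖gfun ρ uinv GΩ GΩ' vC κ x ζ‖ ≤ C₁₀ / ‖ζ‖ ^ (2 + qy (uinv x)) :=
  statement_16_general ξ₀m ξ₀p ξ₁m ξ₁p ν ω lam hω_nonneg uinv huinv_maps v hv_def ρ vC Ω GΩ hGΩ_low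
    hv_intOn hv_diff C₂ C₃ ha6 ha6' GΩ' hGΩ'_low δ₂ θ₀ hθ₀ ha10 Cy qy ha12
end
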